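/- arXiv:2009.05855 — 6 statements merged into one kernel-verified Lean document; each statement's English description precedes it below -/
import Mathlib

section
/- Let G be a Polish group and let (H_x)_{x∈ℝ} be a family of subgroups of G such that the set {(g,x) ∈ G×ℝ : g ∈ H_x} is analytic, the family is independent (for every finite F ⊆ ℝ and every x ∈ ℝ\F, H_x intersects the subgroup generated by (H_y)_{y∈F} trivially), and the family generates G. Then there are only countably many x ∈ ℝ with H_x nontrivial. -/
/-!
Fix a countable dense set `D ⊆ G`. Since the `H x` generate `G`, each `d ∈ D` lies in the subgroup
generated by finitely many `H y`; let `C` be the countable set of all indices so used. For `x ∉ C`,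
the subgroup `L x` generated by the `H y` with `y ≠ x` contains `D`, so it is dense; it is
analytic, hence has the Baire property (Lusin–Sierpiński). By independence `H x ⊓ L x = ⊥`, so
`L x ≠ G` when `H x ≠ ⊥`, and then Pettis' theorem (a non-meagre subgroup with the Baire property
is open, hence closed) forces `L x` to be meagre. Finally, every `g ∈ G` lies in `L x` for all but
finitely many `x`, so by the Baire category theorem only finitely many `x ∉ C` have `H x ≠ ⊥`.
-/

open Topology Set Filter Pointwise MeasureTheory PiNat

section BaireProperty

variable {X : Type*} [TopologicalSpace X]

lemma isMeagre_diff_of_residualEq {s t : Set X} (h : s =ᵇ t) : IsMeagre (s \ t) :=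
  mem_of_superset h.le fun _ hx hst => hst.2 (hx hst.1)

lemma BaireMeasurableSet.exists_isOpen_nonempty_isMeagre_diff {W : Set X}
    (hW : BaireMeasurableSet W) (h : ¬ IsMeagre W) :
    ∃ U : Set X, IsOpen U ∧ U.Nonempty ∧ IsMeagre (U \ W) := by
  obtain ⟨U, hUo, hWU⟩ := hW.residualEq_isOpen
  refine ⟨U, hUo, nonempty_iff_ne_empty.2 fun hU => h ?_, isMeagre_diff_of_residualEq hWU.symm⟩
  simpa [hU] using isMeagre_diff_of_residualEq hWU

lemma IsClosed.baireMeasurableSet {s : Set X} (hs : IsClosed s) : BaireMeasurableSet s :=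
  .of_compl hs.isOpen_compl.baireMeasurableSet

def nonMeagrePoints (S : Set X) : Set X :=
  {x | ∀ U : Set X, IsOpen U → x ∈ U → ¬ IsMeagre (S ∩ U)}

lemma isClosed_nonMeagrePoints (S : Set X) : IsClosed (nonMeagrePoints S) := by
  rw [← isOpen_compl_iff, isOpen_iff_forall_mem_open]
  intro x hx
  simp only [nonMeagrePoints, mem_compl_iff, mem_ofPred_eq, not_forall, not_not] at hx
  obtain ⟨U, hUo, hxU, hUm⟩ := hx
  exact ⟨U, fun y hy hall => hall U hUo hy hUm, hUo, hxU⟩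

lemma isMeagre_diff_nonMeagrePoints [SecondCountableTopology X] (S : Set X) :
    IsMeagre (S \ nonMeagrePoints S) := by
  obtain ⟨b, hbc, -, hb⟩ := TopologicalSpace.exists_countable_basis X
  refine (isMeagre_biUnion (hbc.mono (sep_subset b fun V => IsMeagre (S ∩ V)))
    fun V hV => hV.2).mono ?_
  rintro x ⟨hxS, hx⟩
  simp only [nonMeagrePoints, mem_ofPred_eq, not_forall, not_not] at hx
  obtain ⟨U, hUo, hxU, hUm⟩ := hx
  obtain ⟨V, hVb, hxV, hVU⟩ := hb.exists_subset_of_mem_open hxU hUo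
  exact mem_biUnion ⟨hVb, hUm.mono (inter_subset_inter_right S hVU)⟩ ⟨hxS, hxV⟩

lemma isMeagre_nonMeagrePoints_diff [BaireSpace X] {S Z : Set X} (hZ : BaireMeasurableSet Z)
    (hSZ : S ⊆ Z) : IsMeagre (nonMeagrePoints S \ Z) := by
  by_contra h
  obtain ⟨U, hUo, hUne, hUm⟩ := ((isClosed_nonMeagrePoints S).baireMeasurableSet.diff
    hZ).exists_isOpen_nonempty_isMeagre_diff h
  obtain ⟨x, hxU, hx⟩ : (U ∩ nonMeagrePoints S).Nonempty := by
    by_contra hU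
    refine not_isMeagre_of_isOpen hUo hUne (hUm.mono fun y hy => ?_)
    exact ⟨hy, fun h => hU ⟨y, hy, h.1⟩⟩
  refine hx U hUo hxU (hUm.mono ?_)
  rintro y ⟨hyS, hyU⟩
  exact ⟨hyU, fun h => h.2 (hSZ hyS)⟩

/-- A superset of `S` with the Baire property that is contained, up to a meagre set, in every
superset of `S` with the Baire property. -/
def baireHull (S : Set X) : Set X := nonMeagrePoints S ∪ S

lemma subset_baireHull (S : Set X) : S ⊆ baireHull S := subset_union_right

lemma baireMeasurableSet_baireHull [SecondCountableTopology X] (S : Set X) :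
    BaireMeasurableSet (baireHull S) := by
  rw [baireHull, ← union_sdiff_self]
  exact (isClosed_nonMeagrePoints S).baireMeasurableSet.union
    (isMeagre_diff_nonMeagrePoints S).baireMeasurableSet

lemma isMeagre_baireHull_diff [BaireSpace X] {S Z : Set X} (hZ : BaireMeasurableSet Z)
    (hSZ : S ⊆ Z) : IsMeagre (baireHull S \ Z) := by
  rw [baireHull, union_sdiff_distrib, sdiff_eq_empty.2 hSZ, union_empty]
  exact isMeagre_nonMeagrePoints_diff hZ hSZ

end BaireProperty

namespace PiNat

variable {α : Type*}

/-- `res y n` lists `y (n - 1), …, y 0`, so the children of this cylinder are the cylinders of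
the lists `a :: l`. -/
def listCylinder (l : List α) : Set (ℕ → α) := {y | res y l.length = l}

lemma listCylinder_nil : listCylinder ([] : List α) = univ := by
  simp [listCylinder]

lemma listCylinder_res (x : ℕ → α) (n : ℕ) : listCylinder (res x n) = cylinder x n := by
  rw [listCylinder, res_length, cylinder_eq_res]

lemma listCylinder_eq_iUnion_cons (l : List α) :
    listCylinder l = ⋃ a, listCylinder (a :: l) := by
  ext y
  simp [listCylinder, res_succ]

lemma exists_forall_res_of_forall_exists_cons {P : List α → Prop} (hnil : P [])
    (hcons : ∀ l, P l → ∃ a, P (a :: l)) : ∃ x : ℕ → α, ∀ n, P (res x n) := by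
  have : Nonempty α := ⟨(hcons [] hnil).choose⟩
  choose! next hnext using hcons
  let L : ℕ → List α := fun n => Nat.rec [] (fun _ l => next l :: l) n
  have hL : ∀ n, L n = res (fun k => next (L k)) n := by
    intro n
    induction n with
    | zero => rfl
    | succ n ih => rw [res_succ, ← ih]
  refine ⟨fun k => next (L k), fun n => ?_⟩
  rw [← hL]
  induction n with
  | zero => exact hnil
  | succ n ih => exact hnext _ ih

lemma eq_of_forall_mem_closure_image_cylinder {X : Type*} [TopologicalSpace X] [T2Space X]
    [TopologicalSpace α] [DiscreteTopology α] {f : (ℕ → α) → X} (hf : Continuous f)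
    {x : ℕ → α} {p : X} (h : ∀ n, p ∈ closure (f '' cylinder x n)) : p = f x := by
  have hbasis := ((isTopologicalBasis_cylinders fun _ => α).nhds_hasBasis (a := x)).map f
  have hcluster : ClusterPt p (map f (𝓝 x)) := by
    refine hbasis.clusterPt_iff_forall_mem_closure.2 ?_
    rintro _ ⟨⟨y, n, rfl⟩, hx⟩
    rw [← mem_cylinder_iff_eq.1 hx]
    exact h n
  exact eq_of_nhds_neBot (hcluster.mono hf.continuousAt)

end PiNat

/-- Lusin–Sierpiński. With `A = range f`, each `B l` is a hull with the Baire property of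
`f '' listCylinder l` inside its closure. Off the meagre set where some `B l` is not covered by its
children, a point of `B []` follows an infinite branch `x`, and lies in the closures of the images
of the cylinders around `x`, hence equals `f x`. -/
theorem MeasureTheory.AnalyticSet.baireMeasurableSet {X : Type*} [TopologicalSpace X] [T2Space X]
    [SecondCountableTopology X] [BaireSpace X] {A : Set X} (hA : AnalyticSet A) :
    BaireMeasurableSet A := by
  rw [AnalyticSet] at hA
  rcases hA with rfl | ⟨f, hf, rfl⟩
  · exact isOpen_empty.baireMeasurableSet
  let B : List ℕ → Set X := fun l =>
    baireHull (f '' listCylinder l) ∩ closure (f '' listCylinder l)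
  have hB : ∀ l, BaireMeasurableSet (B l) := fun l =>
    (baireMeasurableSet_baireHull _).inter isClosed_closure.baireMeasurableSet
  have himage_subset : ∀ l, f '' listCylinder l ⊆ B l := fun l =>
    subset_inter (subset_baireHull _) subset_closure
  let M : Set X := ⋃ l, B l \ ⋃ k, B (k :: l)
  have hM : IsMeagre M := by
    refine isMeagre_iUnion fun l => (isMeagre_baireHull_diff (.iUnion fun k => hB _) ?_).mono
      (sdiff_subset_sdiff_left inter_subset_left)
    rw [listCylinder_eq_iUnion_cons, image_iUnion]
    exact iUnion_mono fun k => himage_subset _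
  have hrange : B [] \ M ⊆ range f := by
    rintro p ⟨hp, hpM⟩
    obtain ⟨x, hx⟩ := exists_forall_res_of_forall_exists_cons (P := fun l => p ∈ B l) hp
      fun l hl => by simpa using fun h => hpM (mem_iUnion.2 ⟨l, hl, h⟩)
    refine ⟨x, (eq_of_forall_mem_closure_image_cylinder hf fun n => ?_).symm⟩
    simpa [listCylinder_res] using (hx n).2
  have hrange_subset : range f ⊆ B [] := by
    simpa [listCylinder_nil] using himage_subset []
  rw [← union_sdiff_cancel hrange]
  refine ((hB []).diff hM.baireMeasurableSet).union (hM.mono ?_).baireMeasurableSet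
  exact fun p ⟨hp, hpB⟩ => not_not.1 fun hpM => hpB ⟨hrange_subset hp, hpM⟩

namespace MeasureTheory

variable {α : Type*} [TopologicalSpace α] {s t : Set α}

lemma _root_.IsOpen.analyticSet [PolishSpace α] (hs : IsOpen s) : AnalyticSet s := by
  simpa using hs.analyticSet_image continuous_id

lemma AnalyticSet.inter [T2Space α] (hs : AnalyticSet s) (ht : AnalyticSet t) :
    AnalyticSet (s ∩ t) := by
  rw [inter_eq_iInter]
  exact .iInter (Bool.forall_bool.2 ⟨ht, hs⟩)

lemma AnalyticSet.union (hs : AnalyticSet s) (ht : AnalyticSet t) : AnalyticSet (s ∪ t) := by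
  rw [union_eq_iUnion]
  exact .iUnion (Bool.forall_bool.2 ⟨ht, hs⟩)

lemma AnalyticSet.prod {β : Type*} [TopologicalSpace β] {t : Set β} (hs : AnalyticSet s)
    (ht : AnalyticSet t) : AnalyticSet (s ×ˢ t) := by
  rw [analyticSet_iff_exists_polishSpace_range] at hs ht ⊢
  obtain ⟨γ, _, _, f, hf, rfl⟩ := hs
  obtain ⟨δ, _, _, g, hg, rfl⟩ := ht
  exact ⟨γ × δ, inferInstance, inferInstance, Prod.map f g, hf.prodMap hg, range_prodMap⟩

lemma AnalyticSet.inv [InvolutiveInv α] [ContinuousInv α] (hs : AnalyticSet s) :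
    AnalyticSet s⁻¹ := by
  rw [← image_inv_eq_inv]
  exact hs.image_of_continuous continuous_inv

lemma AnalyticSet.pow [Monoid α] [ContinuousMul α] (hs : AnalyticSet s) (n : ℕ) :
    AnalyticSet (s ^ n) := by
  induction n with
  | zero =>
    rw [pow_zero, AnalyticSet]
    exact .inr ⟨fun _ => 1, continuous_const, range_const⟩
  | succ n ih =>
    rw [pow_succ, ← image_mul_prod]
    exact (ih.prod hs).image_of_continuous continuous_mul

end MeasureTheory

namespace Subgroup

variable {G : Type*} [Group G]

lemma coe_closure_eq_iUnion_pow (S : Set G) : (closure S : Set G) = ⋃ n : ℕ, (S ∪ S⁻¹) ^ n := by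
  refine Subset.antisymm (fun g hg => ?_)
    (iUnion_subset fun n => pow_subset (union_subset subset_closure (inv_subset_closure S)))
  induction hg using closure_induction with
  | mem a ha => exact mem_iUnion.2 ⟨1, by simp [ha]⟩
  | one => exact mem_iUnion.2 ⟨0, by simp⟩
  | mul a b _ _ ha hb =>
    obtain ⟨m, ha⟩ := mem_iUnion.1 ha
    obtain ⟨n, hb⟩ := mem_iUnion.1 hb
    exact mem_iUnion.2 ⟨m + n, pow_add (S ∪ S⁻¹) m n ▸ mul_mem_mul ha hb⟩
  | inv a _ ha =>
    obtain ⟨n, ha⟩ := mem_iUnion.1 ha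
    refine mem_iUnion.2 ⟨n, ?_⟩
    rwa [← Set.inv_mem_inv, inv_inv, ← inv_pow, union_inv, inv_inv, union_comm]

lemma _root_.MeasureTheory.AnalyticSet.subgroupClosure [TopologicalSpace G] [IsTopologicalGroup G]
    {S : Set G} (hS : AnalyticSet S) : AnalyticSet (closure S : Set G) := by
  rw [coe_closure_eq_iUnion_pow]
  exact .iUnion fun n => (hS.union hS.inv).pow n

lemma exists_finset_of_mem_closure_biUnion {ι : Type*} {H : ι → Subgroup G} {s : Set ι} {g : G}
    (hg : g ∈ closure (⋃ i ∈ s, (H i : Set G))) :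
    ∃ F : Finset ι, ↑F ⊆ s ∧ g ∈ ⨆ i ∈ F, H i := by
  classical
  induction hg using closure_induction with
  | mem a ha =>
    obtain ⟨i, hi, ha⟩ := mem_iUnion₂.1 ha
    exact ⟨{i}, by simpa using hi, le_biSup H (Finset.mem_singleton_self i) ha⟩
  | one => exact ⟨∅, by simp, one_mem _⟩
  | mul a b _ _ ha hb =>
    obtain ⟨F₁, hF₁, ha⟩ := ha
    obtain ⟨F₂, hF₂, hb⟩ := hb
    refine ⟨F₁ ∪ F₂, by simp [hF₁, hF₂], mul_mem ?_ ?_⟩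
    · exact SetLike.le_def.1 (biSup_mono fun i hi => Finset.mem_union_left F₂ hi) ha
    · exact SetLike.le_def.1 (biSup_mono fun i hi => Finset.mem_union_right F₁ hi) hb
  | inv a _ ha =>
    obtain ⟨F, hF, ha⟩ := ha
    exact ⟨F, hF, inv_mem ha⟩

end Subgroup

lemma IsMeagre.smul_set {G X : Type*} [Group G] [TopologicalSpace X] [MulAction G X]
    [ContinuousConstSMul G X] {s : Set X} (hs : IsMeagre s) (g : G) : IsMeagre (g • s) := by
  rw [← preimage_smul_inv]
  exact hs.preimage_of_isOpenMap (continuous_const_smul _) (isOpenMap_smul _)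

section Pettis

variable {G : Type*} [Group G] [TopologicalSpace G] [IsTopologicalGroup G] [BaireSpace G]

theorem Subgroup.isOpen_of_baireMeasurableSet_of_not_isMeagre {L : Subgroup G}
    (hL : BaireMeasurableSet (L : Set G)) (hnm : ¬ IsMeagre (L : Set G)) : IsOpen (L : Set G) := by
  obtain ⟨U, hUo, hUne, hUL⟩ := hL.exists_isOpen_nonempty_isMeagre_diff hnm
  obtain ⟨u, huU, huL⟩ : (U ∩ L).Nonempty := by
    by_contra h
    refine not_isMeagre_of_isOpen hUo hUne (hUL.mono fun x hx => ?_)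
    exact ⟨hx, fun hxL => h ⟨x, hx, hxL⟩⟩
  -- Translating by `u⁻¹ ∈ L` gives a neighbourhood `W` of `1` that lies in `L` up to a meagre set.
  set W := u⁻¹ • U
  have hWo : IsOpen W := hUo.smul _
  have hWL : IsMeagre (W \ L) := by
    simpa [W, smul_set_sdiff, smul_coe_set (inv_mem huL)] using hUL.smul_set u⁻¹
  have h1W : (1 : G) ∈ W := by
    rwa [mem_smul_set_iff_inv_smul_mem, inv_inv, smul_eq_mul, mul_one]
  suffices hWsub : W ⊆ L from L.isOpen_of_mem_nhds (mem_of_superset (hWo.mem_nhds h1W) hWsub)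
  intro g hg
  -- The open set `W ∩ g • W ∋ g` is not covered by the meagre sets `W \ L` and `g • (W \ L)`.
  have hO : ¬ IsMeagre (W ∩ g • W) := not_isMeagre_of_isOpen (hWo.inter (hWo.smul g))
    ⟨g, hg, by simpa using smul_mem_smul_set (a := g) h1W⟩
  obtain ⟨h, ⟨hhW, hhgW⟩, hh⟩ :=
    not_subset.1 fun hsub => hO ((hWL.union (hWL.smul_set g)).mono hsub)
  rw [smul_set_sdiff, mem_union, not_or, Set.mem_sdiff, Set.mem_sdiff, not_and_not_right,
    not_and_not_right] at hh
  have hgh : g⁻¹ * h ∈ L := mem_smul_set_iff_inv_smul_mem.1 (hh.2 hhgW)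
  simpa using L.mul_mem (hh.1 hhW) (L.inv_mem hgh)

lemma Subgroup.isMeagre_of_dense {L : Subgroup G} (hL : BaireMeasurableSet (L : Set G))
    (hd : Dense (L : Set G)) (hne : L ≠ ⊤) : IsMeagre (L : Set G) := by
  by_contra hnm
  have hclosed := L.isClosed_of_isOpen (L.isOpen_of_baireMeasurableSet_of_not_isMeagre hL hnm)
  exact hne (coe_eq_univ.1 (hclosed.closure_eq ▸ hd.closure_eq))

end Pettis

lemma Set.finite_of_isMeagre_of_cofinite_mem {X ι : Type*} [TopologicalSpace X] [BaireSpace X]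
    [Nonempty X] {T : Set ι} {L : ι → Set X} (hL : ∀ i ∈ T, IsMeagre (L i))
    (hmem : ∀ x, ∃ F : Finset ι, ∀ i ∈ T, i ∉ F → x ∈ L i) : T.Finite := by
  by_contra hT
  obtain ⟨S, hST, hSc, hSi⟩ := Set.Infinite.exists_subset_countable_infinite hT
  have hS : IsMeagre (⋃ i ∈ S, L i) := isMeagre_biUnion hSc fun i hi => hL i (hST hi)
  obtain ⟨x, hx⟩ := (dense_of_mem_residual hS).nonempty
  obtain ⟨F, hF⟩ := hmem x
  obtain ⟨i, hiS, hiF⟩ := hSi.exists_notMem_finset F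
  exact hx (mem_biUnion hiS (hF i (hST hiS) hiF))

theorem stmt_0 (G : Type*) [Group G] [TopologicalSpace G] [IsTopologicalGroup G]
    [PolishSpace G] (H : ℝ → Subgroup G)
    (hanalytic : MeasureTheory.AnalyticSet {p : G × ℝ | p.1 ∈ H p.2})
    (hindep : ∀ (F : Finset ℝ) (x : ℝ), x ∉ F → H x ⊓ (⨆ y ∈ F, H y) = ⊥)
    (hgen : (⨆ x : ℝ, H x) = ⊤) :
    {x : ℝ | H x ≠ ⊥}.Countable := by
  let L : ℝ → Subgroup G := fun x => Subgroup.closure (⋃ y ∈ ({x}ᶜ : Set ℝ), (H y : Set G))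
  have hL : ∀ x, BaireMeasurableSet (L x : Set G) := fun x => by
    have hunion : ⋃ y ∈ ({x}ᶜ : Set ℝ), (H y : Set G) =
        Prod.fst '' ({p : G × ℝ | p.1 ∈ H p.2} ∩ Prod.snd ⁻¹' {x}ᶜ) := by
      ext g
      simp [and_comm]
    refine (AnalyticSet.subgroupClosure ?_).baireMeasurableSet
    rw [hunion]
    exact (hanalytic.inter (isOpen_compl_singleton.preimage continuous_snd).analyticSet
      ).image_of_continuous continuous_fst
  have hle : ∀ x (F : Finset ℝ), x ∉ F → ⨆ y ∈ F, H y ≤ L x := fun x F hx =>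
    iSup₂_le fun y hy g hg => Subgroup.subset_closure (mem_biUnion (ne_of_mem_of_not_mem hy hx) hg)
  have hdisj : ∀ x, H x ⊓ L x = ⊥ := fun x => by
    refine eq_bot_iff.2 fun g ⟨hgH, hgL⟩ => ?_
    obtain ⟨F, hF, hgF⟩ := Subgroup.exists_finset_of_mem_closure_biUnion hgL
    exact hindep F x (fun hx => hF hx rfl) ▸ ⟨hgH, hgF⟩
  have hsupp : ∀ g : G, ∃ F : Finset ℝ, g ∈ ⨆ y ∈ F, H y := fun g =>
    (Subgroup.exists_finset_of_mem_closure_biUnion (s := univ)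
      (by simp [← Subgroup.iSup_eq_closure, hgen])).imp fun _ => And.right
  choose F hF using hsupp
  obtain ⟨D, hDc, hD⟩ := TopologicalSpace.exists_countable_dense G
  let C : Set ℝ := ⋃ d ∈ D, (F d : Set ℝ)
  have hmeagre : ∀ x ∈ {x | H x ≠ ⊥} \ C, IsMeagre (L x : Set G) := by
    rintro x ⟨hx, hxC⟩
    refine Subgroup.isMeagre_of_dense (hL x) ?_ fun htop => hx (by simpa [htop] using hdisj x)
    exact hD.mono fun d hd => hle x (F d) (fun h => hxC (mem_biUnion hd h)) (hF d)
  have hfinite : ({x | H x ≠ ⊥} \ C).Finite := finite_of_isMeagre_of_cofinite_mem hmeagre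
    fun g => ⟨F g, fun x _ hx => hle x (F g) hx (hF g)⟩
  exact ((hfinite.countable.union (hDc.biUnion fun d _ => (F d).countable_toSet))).mono
    (subset_sdiff_union _ _)
end

section
/- An uncountable-dimensional Polish vector space over ℚ does not have an analytic basis: if V is a Polish topological vector space over ℚ (with the discrete topology on ℚ) and B ⊆ V is an analytic Hamel basis of V over ℚ, then B is countable. -/
/-!
Let `D` be a countable dense subset of `V`; it lies in the span of a countable `B₀ ⊆ B`.
If some `b ∈ B` were outside `B₀`, the subspace `K = span (B \ {b})` would be analytic and
`V = ⋃ q : ℚ, (q • b + K)`. A countable-index analytic subgroup of a Polish group is Borel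
(its complement is a countable union of cosets; Suslin) and non-meagre, hence open by Pettis'
theorem. An open subgroup is closed, and `K ⊇ D` is dense, so `K = V ∋ b`, contradicting linear
independence.
-/

open MeasureTheory Set Filter Topology Pointwise

theorem MeasureTheory.AnalyticSet.diff_singleton {α : Type*} [TopologicalSpace α] [T1Space α]
    {s : Set α} (hs : AnalyticSet s) (a : α) : AnalyticSet (s \ {a}) := by
  obtain ⟨β, _, _, f, hf, rfl⟩ := analyticSet_iff_exists_polishSpace_range.1 hs
  rw [sdiff_eq, ← image_preimage_eq_range_inter]
  exact (isOpen_compl_singleton.preimage hf).analyticSet_image hf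

theorem MeasureTheory.AnalyticSet.span {R M : Type*} [Semiring R] [Countable R] [AddCommMonoid M]
    [Module R M] [TopologicalSpace M] [ContinuousAdd M] [ContinuousConstSMul R M] {s : Set M}
    (hs : AnalyticSet s) : AnalyticSet (Submodule.span R s : Set M) := by
  obtain ⟨β, _, _, f, hf, rfl⟩ := analyticSet_iff_exists_polishSpace_range.1 hs
  have hspan : (Submodule.span R (range f) : Set M) =
      ⋃ (n : ℕ) (c : Fin n → R), range fun x : Fin n → β => ∑ i, c i • f (x i) := by
    ext m
    simp only [SetLike.mem_coe, Submodule.mem_span_set', mem_iUnion, mem_range]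
    refine exists_congr fun n => exists_congr fun c => ⟨?_, ?_⟩
    · rintro ⟨g, rfl⟩
      choose x hx using fun i => (g i).2
      exact ⟨x, by simp [hx]⟩
    · rintro ⟨x, rfl⟩
      exact ⟨fun i => ⟨f (x i), x i, rfl⟩, rfl⟩
  rw [hspan]
  exact .iUnion fun n => .iUnion fun c => analyticSet_range_of_polishSpace (by fun_prop)

theorem Submodule.exists_countable_subset_of_subset_span {R M : Type*} [Semiring R]
    [AddCommMonoid M] [Module R M] {s t : Set M} (ht : t.Countable) (hts : t ⊆ span R s) :
    ∃ u ⊆ s, u.Countable ∧ t ⊆ span R u := by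
  choose T hTs hT using fun x : t => mem_span_finite_of_mem_span (hts x.2)
  have := ht.to_subtype
  exact ⟨⋃ x : t, (T x : Set M), iUnion_subset hTs,
    countable_iUnion fun x => (T x).countable_toSet,
    fun x hx => span_mono (subset_iUnion (fun y : t => (T y : Set M)) ⟨x, hx⟩) (hT ⟨x, hx⟩)⟩

theorem isMeagre_iff_residualEq_empty {X : Type*} [TopologicalSpace X] {s : Set X} :
    IsMeagre s ↔ s =ᵇ (∅ : Set X) :=
  eventuallyEq_empty.symm

theorem Filter.EventuallyEq.isMeagre_iff {X : Type*} [TopologicalSpace X] {s t : Set X}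
    (h : s =ᵇ t) : IsMeagre s ↔ IsMeagre t := by
  simp only [isMeagre_iff_residualEq_empty]
  exact ⟨h.symm.trans, h.trans⟩

section Pettis

variable {G : Type*} [AddCommGroup G] [TopologicalSpace G] [IsTopologicalAddGroup G]
  [BaireSpace G]

theorem BaireMeasurableSet.sub_self_mem_nhds_zero {A : Set G} (hA : BaireMeasurableSet A)
    (hA' : ¬IsMeagre A) : A - A ∈ 𝓝 0 := by
  obtain ⟨U, hU, hAU⟩ := hA.residualEq_isOpen
  obtain ⟨u, hu⟩ : U.Nonempty := by
    refine nonempty_iff_ne_empty.2 fun hU₀ => hA' ?_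
    exact isMeagre_iff_residualEq_empty.2 (hU₀ ▸ hAU)
  have hUU : U - U ⊆ A - A := by
    rintro _ ⟨x, hx, y, hy, rfl⟩
    let τ : G → G := fun w => w + (y - x)
    have hτ : Tendsto τ (residual G) (residual G) :=
      tendsto_residual_of_isOpenMap (continuous_add_const _) (isOpenMap_add_right _)
    have hAτ : (A ∩ τ ⁻¹' A : Set G) =ᵇ (U ∩ τ ⁻¹' U : Set G) :=
      hAU.inter (hAU.comp_tendsto hτ)
    have hxU : x ∈ U ∩ τ ⁻¹' U := ⟨hx, by simpa [τ] using hy⟩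
    obtain ⟨w, hwA, hτwA⟩ := nonempty_of_not_isMeagre <| hAτ.isMeagre_iff.not.2 <|
      not_isMeagre_of_isOpen (hU.inter (hU.preimage (continuous_add_const _))) ⟨x, hxU⟩
    exact ⟨w, hwA, τ w, hτwA, by simp [τ]⟩
  exact mem_of_superset (hU.sub_left.mem_nhds ⟨u, hu, u, hu, sub_self u⟩) hUU

theorem AddSubgroup.isOpen_of_baireMeasurableSet (H : AddSubgroup G)
    (hH : BaireMeasurableSet (H : Set G)) (hH' : ¬IsMeagre (H : Set G)) : IsOpen (H : Set G) :=
  H.isOpen_of_mem_nhds (g := 0) (by simpa using hH.sub_self_mem_nhds_zero hH')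

theorem AddSubgroup.isOpen_of_analyticSet [T2Space G] (H : AddSubgroup G)
    (hH : AnalyticSet (H : Set G)) {s : Set G} (hs : s.Countable)
    (hcover : s + (H : Set G) = univ) : IsOpen (H : Set G) := by
  borelize G
  have hmem (g : G) : ∃ t ∈ s, ∃ h ∈ H, t + h = g := Set.mem_add.1 (hcover ▸ mem_univ g)
  have hcompl : (H : Set G)ᶜ = ⋃ t : ↥(s \ H), ((t : G) + ·) '' (H : Set G) := by
    ext g
    simp only [mem_compl_iff, SetLike.mem_coe, mem_iUnion, mem_image, Subtype.exists,
      Set.mem_sdiff, exists_prop]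
    constructor
    · intro hg
      obtain ⟨t, ht, h, hh, rfl⟩ := hmem g
      exact ⟨t, ⟨ht, fun htH => hg (H.add_mem htH hh)⟩, h, hh, rfl⟩
    · rintro ⟨t, ⟨-, htH⟩, h, hh, rfl⟩ hg
      exact htH (by simpa using H.sub_mem hg hh)
  have : Countable ↥(s \ H) := (hs.mono sdiff_subset).to_subtype
  have : Countable s := hs.to_subtype
  have hmeas : MeasurableSet (H : Set G) := hH.measurableSet_of_compl <|
    hcompl ▸ .iUnion fun _ => hH.image_of_continuous (continuous_const_add _)
  refine H.isOpen_of_baireMeasurableSet hmeas.baireMeasurableSet fun hmeagre => ?_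
  refine not_isMeagre_of_isOpen (isOpen_univ (X := G)) univ_nonempty ?_
  have htrans (t : G) : IsMeagre ((t + ·) '' (H : Set G)) :=
    (Homeomorph.addLeft t).isInducing.isMeagre_image hmeagre
  refine (isMeagre_iUnion fun t : s => htrans t).mono fun g _ => ?_
  obtain ⟨t, ht, h, hh, rfl⟩ := hmem g
  exact mem_iUnion.2 ⟨⟨t, ht⟩, h, hh, rfl⟩

end Pettis

theorem stmt_2 (V : Type*) [AddCommGroup V] [Module ℚ V] [TopologicalSpace V]
    [IsTopologicalAddGroup V] [PolishSpace V]
    (hsmul : ∀ q : ℚ, Continuous fun v : V => q • v)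
    (B : Set V) (hB : MeasureTheory.AnalyticSet B)
    (hind : LinearIndependent ℚ ((↑) : B → V))
    (hspan : Submodule.span ℚ B = ⊤) :
    B.Countable := by
  have : ContinuousConstSMul ℚ V := ⟨hsmul⟩
  obtain ⟨D, hDc, hD⟩ := TopologicalSpace.exists_countable_dense V
  obtain ⟨B₀, hB₀B, hB₀c, hDB₀⟩ :=
    Submodule.exists_countable_subset_of_subset_span (R := ℚ) hDc fun x _ => hspan ▸ Submodule.mem_top
  refine hB₀c.mono fun b hb => by_contra fun hbB₀ => ?_
  set K := Submodule.span ℚ (B \ {b})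
  have hindB : LinearIndepOn ℚ id B := hind
  have hbK : b ∉ K := (hindB.mono sdiff_subset).notMem_span_iff_id.2
    ⟨by simpa [insert_eq_of_mem hb] using hindB, by simp⟩
  have hcover : range (fun q : ℚ => q • b) + (K : Set V) = univ := by
    refine eq_univ_of_forall fun v => ?_
    have hv : v ∈ Submodule.span ℚ (insert b (B \ {b})) := by
      simp [insert_eq_of_mem hb, hspan]
    obtain ⟨q, z, hz, rfl⟩ := Submodule.mem_span_insert.1 hv
    exact Set.mem_add.2 ⟨q • b, mem_range_self q, z, hz, rfl⟩
  have hK : IsOpen (K : Set V) :=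
    K.toAddSubgroup.isOpen_of_analyticSet (hB.diff_singleton b).span (countable_range _) hcover
  have hDK : D ⊆ K := hDB₀.trans <| Submodule.span_mono fun x hx =>
    ⟨hB₀B hx, fun hxb => hbB₀ (hxb ▸ hx)⟩
  exact hbK <| (K.toAddSubgroup.isClosed_of_isOpen hK).closure_subset_iff.2 hDK
    (hD.closure_eq ▸ mem_univ b)
end

section
/- Every countable ring R admits a proper norm: there is a function |·| : R → [0,∞) such that (a,b) ↦ |a-b| is a metric on R whose closed balls are finite (hence compact in the discrete topology), and |rs| ≤ |r||s| for all r,s ∈ R. -/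
/-!
Give every element `x` of `R` a cost `w x ≥ 2`, and let `ν a` be the least cost of a ring
expression for `a` built from the signed elements `±x` by sums and products, where costs add
along sums and multiply along products. Then `ν` is symmetric, subadditive and submultiplicative
by construction. Since all costs are `≥ 2`, both halves of an expression of cost `≤ N + 1` have
cost `≤ N`, so by induction on `N` only finitely many elements have cost `≤ N` as soon as every
sublevel set of `w` is finite; an injection `R → ℕ` provides such a `w`.
-/

open scoped Pointwise

namespace CostNorm

variable {R : Type*} [Ring R] (w : R → ℕ)

inductive HasCost : R → ℕ → Prop
  | of (x : R) : HasCost x (w x)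
  | neg_of (x : R) : HasCost (-x) (w x)
  | add {a b : R} {m n : ℕ} : HasCost a m → HasCost b n → HasCost (a + b) (m + n)
  | mul {a b : R} {m n : ℕ} : HasCost a m → HasCost b n → HasCost (a * b) (m * n)

variable {w}

theorem HasCost.neg {a : R} {n : ℕ} (h : HasCost w a n) : HasCost w (-a) n := by
  induction h with
  | of x => exact .neg_of x
  | neg_of x => simpa using HasCost.of (w := w) x
  | add _ _ iha ihb => rw [neg_add]; exact iha.add ihb
  | mul _ hb iha _ => rw [← neg_mul]; exact iha.mul hb

theorem HasCost.two_le (hw : ∀ x, 2 ≤ w x) {a : R} {n : ℕ} (h : HasCost w a n) : 2 ≤ n := by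
  induction h with
  | of x | neg_of x => exact hw x
  | add _ _ iha ihb => omega
  | mul _ _ iha ihb => nlinarith

theorem finite_setOf_hasCost_le (hw : ∀ x, 2 ≤ w x) (hfin : ∀ N, {x | w x ≤ N}.Finite) (N : ℕ) :
    {a : R | ∃ n ≤ N, HasCost w a n}.Finite := by
  induction N with
  | zero =>
    refine Set.finite_empty.subset fun a ⟨n, hn, h⟩ => ?_
    have := h.two_le hw
    omega
  | succ N ih =>
    refine ((((hfin (N + 1)).union (hfin (N + 1)).neg).union (ih.add ih)).union
      (ih.mul ih)).subset ?_
    rintro _ ⟨n, hn, h⟩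
    cases h with
    | of x => exact .inl (.inl (.inl hn))
    | neg_of x => exact .inl (.inl (.inr (by simpa using hn)))
    | @add _ _ k l ha hb =>
      have := ha.two_le hw
      have := hb.two_le hw
      exact .inl (.inr (Set.add_mem_add ⟨k, by omega, ha⟩ ⟨l, by omega, hb⟩))
    | @mul _ _ k l ha hb =>
      have := ha.two_le hw
      have := hb.two_le hw
      exact .inr (Set.mul_mem_mul ⟨k, by nlinarith, ha⟩ ⟨l, by nlinarith, hb⟩)

variable (w) in
open scoped Classical in
/-- `0` is treated separately because every expression has cost `≥ 2`. -/
noncomputable def costNorm (a : R) : ℕ :=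
  if a = 0 then 0 else sInf {n | HasCost w a n}

@[simp]
theorem costNorm_zero : costNorm w (0 : R) = 0 := if_pos rfl

theorem costNorm_le {a : R} {n : ℕ} (h : HasCost w a n) : costNorm w a ≤ n := by
  unfold costNorm
  split_ifs
  exacts [n.zero_le, Nat.sInf_le h]

theorem hasCost_costNorm {a : R} (ha : a ≠ 0) : HasCost w a (costNorm w a) := by
  rw [costNorm, if_neg ha]
  exact Nat.sInf_mem ⟨_, HasCost.of a⟩

theorem costNorm_eq_zero (hw : ∀ x, 2 ≤ w x) {a : R} : costNorm w a = 0 ↔ a = 0 := by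
  refine ⟨fun h => ?_, fun h => h ▸ costNorm_zero⟩
  by_contra ha
  have := (hasCost_costNorm ha).two_le hw
  omega

theorem costNorm_neg (a : R) : costNorm w (-a) = costNorm w a := by
  have key : ∀ b : R, costNorm w (-b) ≤ costNorm w b := fun b => by
    by_cases hb : b = 0
    · simp [hb]
    · exact costNorm_le (hasCost_costNorm hb).neg
  exact le_antisymm (key a) (by simpa using key (-a))

theorem costNorm_add_le (a b : R) : costNorm w (a + b) ≤ costNorm w a + costNorm w b := by
  by_cases ha : a = 0
  · simp [ha]
  by_cases hb : b = 0
  · simp [hb]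
  exact costNorm_le ((hasCost_costNorm ha).add (hasCost_costNorm hb))

theorem costNorm_mul_le (a b : R) : costNorm w (a * b) ≤ costNorm w a * costNorm w b := by
  by_cases ha : a = 0
  · simp [ha]
  by_cases hb : b = 0
  · simp [hb]
  exact costNorm_le ((hasCost_costNorm ha).mul (hasCost_costNorm hb))

theorem finite_setOf_costNorm_le (hw : ∀ x, 2 ≤ w x) (hfin : ∀ N, {x | w x ≤ N}.Finite)
    (N : ℕ) : {a : R | costNorm w a ≤ N}.Finite := by
  refine ((finite_setOf_hasCost_le hw hfin N).insert 0).subset fun a ha => ?_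
  by_cases ha0 : a = 0
  · exact .inl ha0
  · exact .inr ⟨_, ha, hasCost_costNorm ha0⟩

end CostNorm

open CostNorm in
theorem stmt_11 (R : Type*) [Ring R] [Countable R] :
    ∃ ν : R → ℝ,
      (∀ a, 0 ≤ ν a) ∧
      (∀ a, ν a = 0 ↔ a = 0) ∧
      (∀ a, ν (-a) = ν a) ∧
      (∀ a b, ν (a + b) ≤ ν a + ν b) ∧
      (∀ a b, ν (a * b) ≤ ν a * ν b) ∧
      (∀ (a : R) (ε : ℝ), {b : R | ν (b - a) ≤ ε}.Finite) := by
  obtain ⟨g, hg⟩ := Countable.exists_injective_nat R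
  set w : R → ℕ := fun x => g x + 2
  have hw : ∀ x, 2 ≤ w x := fun x => Nat.le_add_left 2 (g x)
  have hfin : ∀ N, {x | w x ≤ N}.Finite := fun N =>
    (Set.finite_Iic N).preimage (add_left_injective 2 |>.comp hg).injOn
  refine ⟨fun a => costNorm w a, fun a => by positivity, fun a => by simp [costNorm_eq_zero hw],
    fun a => by simp [costNorm_neg], fun a b => by dsimp only; exact_mod_cast costNorm_add_le a b,
    fun a b => by dsimp only; exact_mod_cast costNorm_mul_le a b, fun a ε => ?_⟩
  refine ((finite_setOf_costNorm_le hw hfin ⌊ε⌋₊).image (· + a)).subset fun b hb => ?_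
  exact ⟨b - a, Nat.le_floor hb, sub_add_cancel b a⟩
end

section
/- Let R be an infinite countable ring with a proper norm, and let B = {m ∈ ℓ¹(R) : ‖m‖ ≤ ε} be a closed ball in ℓ¹(R). Then the complement of B is dense in ℓ¹(R) with respect to the product topology inherited from R^ℕ; equivalently, B is nowhere dense in (ℓ¹(R), product topology). -/
/-- Membership in `ℓ¹(R)`: the series `Σ ν (x k) / k!` converges. -/
def MemL1 {R : Type*} (ν : R → ℝ) (x : ℕ → R) : Prop :=
  Summable fun k => ν (x k) / (Nat.factorial k : ℝ)

/-- The `ℓ¹` norm `Σ_k ν (x k) / k!`. -/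
noncomputable def l1Norm {R : Type*} (ν : R → ℝ) (x : ℕ → R) : ℝ :=
  ∑' k, ν (x k) / (Nat.factorial k : ℝ)

/-- For an infinite countable ring `R` with a proper norm, the complement of every
closed ball of `ℓ¹(R)` is dense in `ℓ¹(R)` with the product topology inherited from
`R^ℕ`: every basic cylinder neighbourhood of a point of `ℓ¹(R)` meets the complement
of the ball. -/
theorem stmt_13 (R : Type*) [Ring R] [Countable R] [Infinite R] (ν : R → ℝ)
    (hnonneg : ∀ a, 0 ≤ ν a)
    (hzero : ∀ a, ν a = 0 ↔ a = 0)
    (hneg : ∀ a, ν (-a) = ν a)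
    (hadd : ∀ a b, ν (a + b) ≤ ν a + ν b)
    (hmul : ∀ a b, ν (a * b) ≤ ν a * ν b)
    (hproper : ∀ (a : R) (ε : ℝ), {b : R | ν (b - a) ≤ ε}.Finite)
    (ε : ℝ) :
    ∀ x : ℕ → R, MemL1 ν x → ∀ n : ℕ,
      ∃ y : ℕ → R, MemL1 ν y ∧ (∀ k < n, y k = x k) ∧ ¬ l1Norm ν y ≤ ε := by
  intro x hx n
  -- find r with ν r > ε * n!
  have hfin := hproper 0 (ε * (Nat.factorial n : ℝ))
  obtain ⟨r, hr⟩ := Set.Infinite.nonempty ((Set.infinite_univ (α := R)).diff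
    (hfin.subset (fun b hb => hb)))
  have hrν : ¬ ν (r - 0) ≤ ε * (Nat.factorial n : ℝ) := hr.2
  rw [sub_zero] at hrν
  push_neg at hrν
  set y := Function.update x n r with hy
  have hfact : (0 : ℝ) < (Nat.factorial n : ℝ) := by positivity
  have hfun : (fun k => ν (y k) / (Nat.factorial k : ℝ)) =
      Function.update (fun k => ν (x k) / (Nat.factorial k : ℝ)) n
        (ν r / (Nat.factorial n : ℝ)) := by
    funext k
    by_cases hk : k = n
    · subst hk; simp [hy]
    · simp [hy, Function.update_of_ne hk]
  have hsum : MemL1 ν y := by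
    unfold MemL1
    rw [hfun]
    exact hx.update n _
  refine ⟨y, hsum, fun k hk => Function.update_of_ne (by omega) _ _, ?_⟩
  have hle : ν (y n) / (Nat.factorial n : ℝ) ≤ l1Norm ν y :=
    Summable.le_tsum hsum n (fun j _ => div_nonneg (hnonneg _) (by positivity))
  have hyn : y n = r := Function.update_self _ _ _
  rw [hyn] at hle
  have : ε < ν r / (Nat.factorial n : ℝ) := (lt_div_iff₀ hfact).2 hrν
  linarith
end

section
/- Let R be a proper normed division ring, M a Polish R-vector space, and N ⊆ M an F_σ vector subspace. Then exactly one of the following holds: (1) dim_R(M/N) is countable; (2) there is a continuous R-linear map ℓ¹(R) → M that descends to an injection ℓ¹(R) → M/N. -/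
/-!
If `f` exists, the indicator sequences of `{n | qₙ < t}`, `t ∈ ℝ`, for an enumeration `(qₙ)` of
`ℚ`, are linearly independent in `ℓ¹(R)`, so their images are independent modulo `N` and
`dim (M ⧸ N) ≥ 𝔠`.

Conversely, if `dim (M ⧸ N)` is uncountable, choose inductively vectors `vⱼ`, independent modulo
`N`, and closed neighbourhoods `Wⱼ` of `0` with `Wⱼ₊₁ + Wⱼ₊₁ ⊆ Wⱼ` and `r • vⱼ ∈ Wⱼ` whenever
`ν r ≤ (j + 1) j!`, and put `f x = Σ xₖ vₖ`. As `ν xₖ ≤ ‖x‖ k!`, the tails of this series lie in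
the `Wⱼ`. The metric of `M` need not be invariant, so `Wⱼ` is also chosen so small that
translating the compact set of partial sums with coefficients `ν rₖ ≤ j k!` by `Wⱼ` moves it by
less than `2⁻ʲ`; this makes the series converge. By properness of `ν`, the normalised combinations
`v_{k₀} + Σ_{k₀ < k < j} rₖ vₖ` with such coefficients also form compact sets; these miss `N`, hence
every closed `Fₙ ⊆ N`, and shrinking `Wⱼ` keeps them away from `Fₙ`. If `f x ∈ N` with `x ≠ 0`,
normalise `x` at its first nonzero coefficient `k₀` and write `f x` as such a combination plus an
element of `Wⱼ + Wⱼ`, for `j` large, to get a contradiction.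
-/

open Filter Set Topology Cardinal
open scoped Nat

theorem exists_seq_forall_of_forall_exists {α : Type*} [Nonempty α]
    (P : (ℕ → α) → ℕ → α → Prop)
    (hlocal : ∀ s t j a, (∀ i < j, s i = t i) → P s j a → P t j a)
    (hstep : ∀ s j, (∀ i < j, P s i (s i)) → ∃ a, P s j a) :
    ∃ s : ℕ → α, ∀ j, P s j (s j) := by
  classical
  let extend (j : ℕ) (s : {s : ℕ → α // ∀ i < j, P s i (s i)}) :
      {s : ℕ → α // ∀ i < j + 1, P s i (s i)} :=
    ⟨Function.update s.1 j (hstep s.1 j s.2).choose, fun i hi => by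
      have hagree : ∀ l < i, s.1 l = Function.update s.1 j (hstep s.1 j s.2).choose l :=
        fun l hl => (Function.update_of_ne (by omega) _ _).symm
      rcases (Nat.lt_succ_iff_lt_or_eq.1 hi) with hi | rfl
      · rw [Function.update_of_ne hi.ne]
        exact hlocal _ _ _ _ hagree (s.2 i hi)
      · rw [Function.update_self]
        exact hlocal _ _ _ _ hagree (hstep s.1 i s.2).choose_spec⟩
  let g : (j : ℕ) → {s : ℕ → α // ∀ i < j, P s i (s i)} :=
    fun j => Nat.rec ⟨fun _ => Classical.arbitrary α, fun _ h => absurd h (Nat.not_lt_zero _)⟩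
      extend j
  have hcoh : ∀ k i, i < k → (g k).1 i = (g (i + 1)).1 i := by
    intro k
    induction k with
    | zero => intro i hi; omega
    | succ k ih =>
      intro i hi
      rcases Nat.lt_succ_iff_lt_or_eq.1 hi with hi | rfl
      · exact (Function.update_of_ne hi.ne _ _).trans (ih i hi)
      · rfl
  exact ⟨fun i => (g (i + 1)).1 i, fun j =>
    hlocal _ _ _ _ (fun i hi => hcoh (j + 1) i (by omega)) ((g (j + 1)).2 j (by omega))⟩

theorem Submodule.countable_quotient_of_isOpen {R M : Type*} [Ring R] [AddCommGroup M] [Module R M]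
    [TopologicalSpace M] [IsTopologicalAddGroup M] [TopologicalSpace.SeparableSpace M]
    (P : Submodule R M) (hP : IsOpen (P : Set M)) : Countable (M ⧸ P) := by
  have : DiscreteTopology (M ⧸ P.toAddSubgroup) := QuotientAddGroup.discreteTopology hP
  have : TopologicalSpace.SeparableSpace (M ⧸ P.toAddSubgroup) :=
    QuotientAddGroup.isQuotientMap_mk _ |>.separableSpace
  exact (TopologicalSpace.separableSpace_iff_countable (α := M ⧸ P.toAddSubgroup)).1 this

theorem Submodule.exists_mem_nhds_mkQ_notMem_span {R M : Type*} [DivisionRing R] [AddCommGroup M]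
    [Module R M] [TopologicalSpace M] [IsTopologicalAddGroup M] [TopologicalSpace.SeparableSpace M]
    (N : Submodule R M) (hrank : ℵ₀ < Module.rank R (M ⧸ N)) {U : Set M} (hU : U ∈ 𝓝 0)
    {s : Set (M ⧸ N)} (hs : s.Countable) : ∃ v ∈ U, N.mkQ v ∉ span R s := by
  by_contra! hUs
  set P := (span R s).comap N.mkQ
  have hNP : N ≤ P := fun x hx => by simp [P, (Submodule.Quotient.mk_eq_zero N).2 hx]
  have : Countable (M ⧸ P) :=
    P.countable_quotient_of_isOpen (P.toAddSubgroup.isOpen_of_mem_nhds (mem_of_superset hU hUs))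
  have hmap : P.map N.mkQ = span R s := map_comap_eq_of_surjective N.mkQ_surjective _
  have hquot : Module.rank R ((M ⧸ N) ⧸ span R s) ≤ ℵ₀ := by
    rw [← hmap, (quotientQuotientEquivQuotient N P hNP).rank_eq]
    exact (rank_le_card R _).trans mk_le_aleph0
  have hspan : Module.rank R (span R s) ≤ ℵ₀ := (rank_span_le s).trans hs.le_aleph0
  refine hrank.not_ge ?_
  rw [← rank_quotient_add_rank_of_divisionRing (span R s), ← aleph0_add_aleph0]
  exact add_le_add hquot hspan

section Topology

variable {M : Type*} [AddZeroClass M] [PseudoMetricSpace M] [ContinuousAdd M] {K : Set M}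

theorem IsCompact.eventually_forall_dist_add_lt (hK : IsCompact K) {ε : ℝ} (hε : 0 < ε) :
    ∀ᶠ w in 𝓝 (0 : M), ∀ c ∈ K, dist (c + w) c < ε :=
  hK.eventually_forall_of_forall_eventually fun c _ =>
    ((continuous_snd.add continuous_fst).dist continuous_snd).tendsto ((0 : M), c) |>.eventually
      (gt_mem_nhds (by simpa using hε))

theorem IsCompact.eventually_forall_add_notMem (hK : IsCompact K) {F : Set M} (hF : IsClosed F)
    (hKF : Disjoint K F) : ∀ᶠ w in 𝓝 (0 : M), ∀ c ∈ K, c + w ∉ F :=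
  hK.eventually_forall_of_forall_eventually fun c hc =>
    (continuous_snd.add continuous_fst).tendsto ((0 : M), c) |>.eventually_mem
      (hF.isOpen_compl.mem_nhds (by simpa using hKF.notMem_of_mem_left hc))

end Topology

theorem IsCompact.eventually_forall_smul_mem {R M : Type*} [TopologicalSpace R] [TopologicalSpace M]
    [Zero M] [SMulZeroClass R M] [ContinuousSMul R M] {K : Set R} (hK : IsCompact K) {W : Set M}
    (hW : W ∈ 𝓝 0) : ∀ᶠ v in 𝓝 (0 : M), ∀ r ∈ K, r • v ∈ W :=
  hK.eventually_forall_of_forall_eventually fun r _ =>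
    (continuous_snd.smul continuous_fst).tendsto ((0 : M), r) |>.eventually_mem (by simpa using hW)

section Independence

variable {K V : Type*} [DivisionRing K] [AddCommGroup V] [Module K V]

theorem linearIndepOn_Iio_of_notMem_span {v : ℕ → V} {j : ℕ}
    (h : ∀ i < j, v i ∉ Submodule.span K (v '' Iio i)) : LinearIndepOn K v (Iio j) := by
  induction j with
  | zero => simp
  | succ j ih =>
    have hIio : Iio (j + 1) = insert j (Iio j) := by ext; simp
    rw [hIio, linearIndepOn_insert self_notMem_Iio]
    exact ⟨ih fun i hi => h i (by omega), h j (by omega)⟩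

theorem LinearIndepOn.add_sum_smul_ne_zero {ι : Type*} {v : ι → V} {s : Set ι} {i : ι}
    (hv : LinearIndepOn K v (insert i s)) (hi : i ∉ s) (t : Finset ι) (hts : ↑t ⊆ s) (c : ι → K) :
    v i + ∑ k ∈ t, c k • v k ≠ 0 := fun h => by
  apply hv.notMem_span_of_insert hi
  rw [eq_neg_of_add_eq_zero_left h]
  exact Submodule.neg_mem _ (Submodule.sum_mem _ fun k hk =>
    Submodule.smul_mem _ _ (Submodule.subset_span (mem_image_of_mem v (hts hk))))

theorem Submodule.add_sum_smul_notMem_of_linearIndepOn {M : Type*} [AddCommGroup M] [Module K M]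
    (N : Submodule K M) {v : ℕ → M} {j k₀ : ℕ} (hv : LinearIndepOn K (N.mkQ ∘ v) (Iio j))
    (hk₀ : k₀ < j) (r : ℕ → K) : v k₀ + ∑ k ∈ Finset.Ico (k₀ + 1) j, r k • v k ∉ N := fun hN => by
  have hind : LinearIndepOn K (N.mkQ ∘ v) (insert k₀ (Finset.Ico (k₀ + 1) j : Set ℕ)) :=
    hv.mono (insert_subset hk₀ fun k hk => (Finset.mem_Ico.1 hk).2)
  refine hind.add_sum_smul_ne_zero (by simp) _ subset_rfl r ?_
  have h0 : N.mkQ (v k₀ + ∑ k ∈ Finset.Ico (k₀ + 1) j, r k • v k) = 0 :=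
    (Submodule.Quotient.mk_eq_zero N).2 hN
  simpa only [map_add, map_sum, map_smul, Function.comp_apply] using h0

end Independence

theorem sum_range_smul_eq_add_sum_Ico {R M : Type*} [Semiring R] [AddCommMonoid M] [Module R M]
    {y : ℕ → R} {v : ℕ → M} {k₀ j : ℕ}
    (hy : ∀ k < k₀, y k = 0) (hk₀ : y k₀ = 1) (hj : k₀ < j) :
    ∑ k ∈ Finset.range j, y k • v k = v k₀ + ∑ k ∈ Finset.Ico (k₀ + 1) j, y k • v k := by
  rw [← Finset.sum_range_add_sum_Ico _ hj, Finset.sum_range_succ,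
    Finset.sum_eq_zero fun k hk => by rw [hy k (Finset.mem_range.1 hk), zero_smul], hk₀, one_smul,
    zero_add]

section L1

variable {R : Type*} [Ring R] {p : RingSeminorm R}

theorem MemL1.add {x y : ℕ → R} (hx : MemL1 p x) (hy : MemL1 p y) : MemL1 p (x + y) :=
  (Summable.add hx hy).of_nonneg_of_le (fun _ => by positivity) fun k => by
    rw [Pi.add_apply, ← add_div]
    gcongr
    exact map_add_le_add p _ _

theorem MemL1.smul (r : R) {x : ℕ → R} (hx : MemL1 p x) : MemL1 p (r • x) :=
  (hx.mul_left (p r)).of_nonneg_of_le (fun _ => by positivity) fun k => by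
    rw [← mul_div_assoc]
    gcongr
    exact map_mul_le_mul p _ _

variable (p) in
def l1Submodule : Submodule R (ℕ → R) where
  carrier := {x | MemL1 p x}
  add_mem' := MemL1.add
  zero_mem' := by simp [MemL1, summable_zero]
  smul_mem' := MemL1.smul

theorem MemL1.sub {x y : ℕ → R} (hx : MemL1 p x) (hy : MemL1 p y) : MemL1 p (x - y) :=
  (l1Submodule p).sub_mem hx hy

variable (p) in
def coeffBox (B : ℝ) : Set (ℕ → R) := {r | ∀ k, p (r k) ≤ B * k !}

theorem coeffBox_mono {B B' : ℝ} (h : B ≤ B') : coeffBox p B ⊆ coeffBox p B' :=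
  fun _ hr k => (hr k).trans (by gcongr)

theorem zero_mem_coeffBox {B : ℝ} (hB : 0 ≤ B) : (0 : ℕ → R) ∈ coeffBox p B :=
  fun k => by simp only [Pi.zero_apply, map_zero]; positivity

theorem smul_mem_coeffBox (r : R) {x : ℕ → R} {B : ℝ} (hx : x ∈ coeffBox p B) :
    r • x ∈ coeffBox p (p r * B) := fun k =>
  calc p (r * x k) ≤ p r * p (x k) := map_mul_le_mul p _ _
    _ ≤ p r * B * k ! := by rw [mul_assoc]; gcongr; exact hx k

theorem MemL1.mem_coeffBox {x : ℕ → R} (hx : MemL1 p x) : x ∈ coeffBox p (l1Norm p x) :=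
  fun k => (div_le_iff₀ (by positivity)).1 (hx.le_tsum k fun _ _ => by positivity)

theorem eventually_mem_coeffBox {x : ℕ → R} {B : ℝ} (hx : x ∈ coeffBox p B) :
    ∀ᶠ j : ℕ in atTop, x ∈ coeffBox p j :=
  (eventually_ge_atTop ⌈B⌉₊).mono fun _ hj => coeffBox_mono ((Nat.le_ceil B).trans
    (by exact_mod_cast hj)) hx

theorem isCompact_coeffBox [TopologicalSpace R] (hcompact : ∀ B, IsCompact {r : R | p r ≤ B})
    (B : ℝ) : IsCompact (coeffBox p B) := by
  have : coeffBox p B = Set.pi univ fun k => {r : R | p r ≤ B * k !} := by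
    ext; simp [coeffBox]
  rw [this]
  exact isCompact_univ_pi fun k => hcompact _

end L1

section Continuum

variable {R : Type*} [Ring R]

noncomputable def ratIndicator (t : ℝ) : ℕ → R :=
  fun n => if (Denumerable.ofNat ℚ n : ℝ) < t then 1 else 0

theorem memL1_ratIndicator (p : RingSeminorm R) (t : ℝ) : MemL1 p (ratIndicator t : ℕ → R) :=
  ((Real.summable_pow_div_factorial 1).mul_left (p 1)).of_nonneg_of_le (fun _ => by positivity)
    fun k => by
      rw [one_pow, ← mul_div_assoc, mul_one]
      gcongr
      unfold ratIndicator
      split_ifs <;> simp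

open Finset in
theorem linearIndependent_ratIndicator [Nontrivial R] :
    LinearIndependent R (ratIndicator : ℝ → ℕ → R) := by
  classical
  rw [linearIndependent_iff']
  intro s g hsum
  by_contra! hne
  set S := s.filter (g · ≠ 0)
  have hS : S.Nonempty := by
    obtain ⟨t, ht, hgt⟩ := hne
    exact ⟨t, mem_filter.2 ⟨ht, hgt⟩⟩
  set T := S.max' hS
  -- at the index of a rational `q ∈ (b, T)` only the indicator of `T` is nonzero
  set b := (insert (T - 1) (S.filter (· < T))).max' (insert_nonempty _ _)
  have hbT : b < T := (max'_lt_iff _ _).2 fun u hu => by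
    rcases mem_insert.1 hu with rfl | hu
    · linarith
    · exact (mem_filter.1 hu).2
  obtain ⟨q, hbq, hqT⟩ := exists_rat_btwn hbT
  obtain ⟨n, hn⟩ : ∃ n, Denumerable.ofNat ℚ n = q := ⟨_, Denumerable.ofNat_encode q⟩
  have hval : ∀ u, ratIndicator u n = if (q : ℝ) < u then (1 : R) else 0 :=
    fun u => by rw [ratIndicator, hn]
  have hT : T ∈ S := S.max'_mem hS
  have := congrFun hsum n
  rw [Finset.sum_apply, Finset.sum_eq_single T] at this
  · rw [Pi.smul_apply, hval, if_pos hqT, smul_eq_mul, mul_one] at this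
    exact (mem_filter.1 hT).2 this
  · intro u hu huT
    by_cases hgu : g u = 0
    · simp [hgu]
    have huS : u ∈ S := mem_filter.2 ⟨hu, hgu⟩
    have huT' : u < T := lt_of_le_of_ne (S.le_max' u huS) huT
    have hub : u ≤ b := by
      apply le_max'
      exact mem_insert_of_mem (mem_filter.2 ⟨huS, huT'⟩)
    rw [Pi.smul_apply, hval, if_neg (not_lt.2 (hub.trans hbq.le)), smul_zero]
  · exact fun h => absurd (mem_filter.1 hT).1 h

theorem aleph0_lt_rank_quotient_of_l1 {R M : Type*} [Ring R] [Nontrivial R] [AddCommGroup M]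
    [Module R M] {p : RingSeminorm R} (N : Submodule R M) (f : {x : ℕ → R // MemL1 p x} → M)
    (hadd : ∀ (x y : {x : ℕ → R // MemL1 p x}) (h : MemL1 p (x.1 + y.1)),
      f ⟨x.1 + y.1, h⟩ = f x + f y)
    (hsmul : ∀ (r : R) (x : {x : ℕ → R // MemL1 p x}) (h : MemL1 p (r • x.1)),
      f ⟨r • x.1, h⟩ = r • f x)
    (hinj : ∀ x y : {x : ℕ → R // MemL1 p x}, f x - f y ∈ N → x = y) :
    ℵ₀ < Module.rank R (M ⧸ N) := by
  let g : l1Submodule p →ₗ[R] M :=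
    { toFun := fun x => f ⟨x.1, x.2⟩
      map_add' := fun x y => hadd ⟨x.1, x.2⟩ ⟨y.1, y.2⟩ (x + y).2
      map_smul' := fun r x => hsmul r ⟨x.1, x.2⟩ (r • x).2 }
  have hker : LinearMap.ker (N.mkQ ∘ₗ g) = ⊥ := by
    refine LinearMap.ker_eq_bot'.2 fun z hz => Subtype.ext (congrArg Subtype.val
      (hinj ⟨z.1, z.2⟩ ⟨0, (l1Submodule p).zero_mem⟩ ?_))
    rw [show f ⟨0, _⟩ = g 0 from rfl, map_zero, sub_zero]
    exact (Submodule.Quotient.mk_eq_zero N).1 hz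
  have hli : LinearIndependent R fun t : ℝ =>
      (⟨ratIndicator t, memL1_ratIndicator p t⟩ : l1Submodule p) :=
    LinearIndependent.of_comp (l1Submodule p).subtype linearIndependent_ratIndicator
  have hcard := (hli.map' _ hker).cardinal_lift_le_rank
  rw [mk_real, lift_continuum, lift_uzero] at hcard
  exact aleph0_lt_continuum.trans_le hcard

end Continuum

theorem eventually_forall_smul_mem_of_le {R M : Type*} [Ring R] [TopologicalSpace R]
    {p : RingSeminorm R} [AddCommGroup M] [Module R M] [TopologicalSpace M] [ContinuousSMul R M]
    (hball : ∀ U ∈ 𝓝 (0 : R), ∃ ε > 0, ∀ r, p r < ε → r ∈ U) (v : M) {U : Set M}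
    (hU : U ∈ 𝓝 0) (K : ℝ) : ∀ᶠ δ in 𝓝[>] (0 : ℝ), ∀ r, p r ≤ δ * K → r • v ∈ U := by
  obtain ⟨ε, hε, hεU⟩ := hball _
    ((continuous_id.smul continuous_const : Continuous fun r : R => r • v).tendsto' 0 0
      (zero_smul R v) hU)
  have hδ : ∀ᶠ δ in 𝓝 (0 : ℝ), δ * K < ε :=
    (continuous_id.mul continuous_const).tendsto' 0 0 (zero_mul K) |>.eventually (gt_mem_nhds hε)
  exact (hδ.filter_mono nhdsWithin_le_nhds).mono fun δ hδ r hr => hεU r (hr.trans_lt hδ)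

section Construction

variable {R : Type*} [DivisionRing R] {p : RingSeminorm R}
  {M : Type*} [AddCommGroup M] [Module R M] [PseudoMetricSpace M]
  {F : ℕ → Set M} {N : Submodule R M}

/-- Step `j` of the construction: requirements on `(Wj, vj)` given the earlier steps
`(W i, v i)`, `i < j`. -/
structure IsGoodStep (p : RingSeminorm R) (F : ℕ → Set M) (N : Submodule R M)
    (W : ℕ → Set M) (v : ℕ → M) (j : ℕ) (Wj : Set M) (vj : M) : Prop where
  mem_nhds : Wj ∈ 𝓝 0
  isClosed : IsClosed Wj
  add_mem : ∀ i < j, ∀ a ∈ Wj, ∀ b ∈ Wj, a + b ∈ W i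
  dist_add_lt : ∀ r ∈ coeffBox p j, ∀ w ∈ Wj,
    dist (∑ k ∈ Finset.range j, r k • v k + w) (∑ k ∈ Finset.range j, r k • v k) < 2⁻¹ ^ j
  add_notMem : ∀ n < j, ∀ k₀ < j, ∀ r ∈ coeffBox p j, ∀ a ∈ Wj, ∀ b ∈ Wj,
    v k₀ + ∑ k ∈ Finset.Ico (k₀ + 1) j, r k • v k + (a + b) ∉ F n
  smul_mem : ∀ r, p r ≤ (j + 1) * j ! → r • vj ∈ Wj
  mkQ_notMem_span : N.mkQ vj ∉ Submodule.span R ((N.mkQ ∘ v) '' Iio j)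

theorem IsGoodStep.congr {W W' : ℕ → Set M} {v v' : ℕ → M} {j : ℕ} {Wj : Set M} {vj : M}
    (h : IsGoodStep p F N W v j Wj vj) (hW : ∀ i < j, W i = W' i)
    (hv : ∀ i < j, v i = v' i) : IsGoodStep p F N W' v' j Wj vj := by
  have hsum : ∀ (s : Finset ℕ), (∀ k ∈ s, k < j) → ∀ r : ℕ → R,
      ∑ k ∈ s, r k • v k = ∑ k ∈ s, r k • v' k :=
    fun s hs r => Finset.sum_congr rfl fun k hk => by rw [hv k (hs k hk)]
  have hrange : ∀ k ∈ Finset.range j, k < j := fun k hk => Finset.mem_range.1 hk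
  have hIco : ∀ k₀, ∀ k ∈ Finset.Ico (k₀ + 1) j, k < j := fun k₀ k hk => (Finset.mem_Ico.1 hk).2
  refine ⟨h.mem_nhds, h.isClosed, fun i hi => hW i hi ▸ h.add_mem i hi, ?_, ?_, h.smul_mem, ?_⟩
  · simpa only [hsum _ hrange] using h.dist_add_lt
  · intro n hn k₀ hk₀
    simpa only [hsum _ (hIco k₀), hv k₀ hk₀] using h.add_notMem n hn k₀ hk₀
  · have himage : (N.mkQ ∘ v) '' Iio j = (N.mkQ ∘ v') '' Iio j :=
      image_congr fun i hi => congrArg N.mkQ (hv i hi)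
    exact himage ▸ h.mkQ_notMem_span

variable [TopologicalSpace R] [IsTopologicalAddGroup M] [ContinuousSMul R M]

theorem exists_isGoodStep [TopologicalSpace.SeparableSpace M]
    (hcompact : ∀ B, IsCompact {r : R | p r ≤ B}) (hF : ∀ n, IsClosed (F n))
    (hFN : ∀ n, F n ⊆ N) (hrank : ℵ₀ < Module.rank R (M ⧸ N)) {W : ℕ → Set M} {v : ℕ → M}
    {j : ℕ} (hW : ∀ i < j, W i ∈ 𝓝 0) (hv : LinearIndepOn R (N.mkQ ∘ v) (Iio j)) :
    ∃ Wj vj, IsGoodStep p F N W v j Wj vj := by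
  set S : (ℕ → R) → M := fun r => ∑ k ∈ Finset.range j, r k • v k
  set C : ℕ → (ℕ → R) → M := fun k₀ r => v k₀ + ∑ k ∈ Finset.Ico (k₀ + 1) j, r k • v k
  have hC : ∀ k₀ < j, Disjoint (C k₀ '' coeffBox p j) (N : Set M) := fun k₀ hk₀ =>
    disjoint_left.2 <| by
      rintro _ ⟨r, -, rfl⟩
      exact N.add_sum_smul_notMem_of_linearIndepOn hv hk₀ r
  have hU : ∀ᶠ w in 𝓝 (0 : M), (∀ i ∈ Iio j, w ∈ W i) ∧
      (∀ c ∈ S '' coeffBox p j, dist (c + w) c < 2⁻¹ ^ j) ∧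
      ∀ n ∈ Iio j, ∀ k₀ ∈ Iio j, ∀ c ∈ C k₀ '' coeffBox p j, c + w ∉ F n := by
    have hbox := isCompact_coeffBox hcompact (j : ℝ)
    have hS : Continuous S := by fun_prop
    have hCcont : ∀ k₀, Continuous (C k₀) := fun k₀ => by fun_prop
    refine ((finite_Iio j).eventually_all.2 hW).and
      (((hbox.image hS).eventually_forall_dist_add_lt (by positivity)).and ?_)
    refine (finite_Iio j).eventually_all.2 fun n _ => (finite_Iio j).eventually_all.2 fun k₀ hk₀ =>
      (hbox.image (hCcont k₀)).eventually_forall_add_notMem (hF n) ?_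
    exact (hC k₀ hk₀).mono_right (hFN n)
  obtain ⟨V, hV, hVU⟩ := exists_nhds_zero_half hU
  obtain ⟨Wj, hWj, hWjc, hWjV⟩ := exists_mem_nhds_isClosed_subset hV
  obtain ⟨vj, hvj, hspan⟩ := N.exists_mem_nhds_mkQ_notMem_span hrank
    ((hcompact ((j + 1) * j !)).eventually_forall_smul_mem hWj) ((finite_Iio j).image _).countable
  have hWjU : ∀ a ∈ Wj, ∀ b ∈ Wj, _ := fun a ha b hb => hVU a (hWjV ha) b (hWjV hb)
  refine ⟨Wj, vj, hWj, hWjc, fun i hi a ha b hb => (hWjU a ha b hb).1 i hi, ?_, ?_,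
    fun r hr => hvj r hr, hspan⟩
  · intro r hr w hw
    simpa using (hWjU w hw 0 (mem_of_mem_nhds hWj)).2.1 _ (mem_image_of_mem S hr)
  · intro n hn k₀ hk₀ r hr a ha b hb
    exact (hWjU a ha b hb).2.2 n hn k₀ hk₀ _ (mem_image_of_mem _ hr)

end Construction

section Series

variable {R : Type*} [DivisionRing R] {p : RingSeminorm R}
  {M : Type*} [AddCommGroup M] [Module R M] [MetricSpace M]
  {F : ℕ → Set M} {N : Submodule R M}

def IsGoodSeq (p : RingSeminorm R) (F : ℕ → Set M) (N : Submodule R M) (W : ℕ → Set M)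
    (v : ℕ → M) : Prop :=
  ∀ j, IsGoodStep p F N W v j (W j) (v j)

theorem exists_isGoodSeq [TopologicalSpace R] [IsTopologicalAddGroup M] [ContinuousSMul R M]
    [TopologicalSpace.SeparableSpace M] (hcompact : ∀ B, IsCompact {r : R | p r ≤ B})
    (hF : ∀ n, IsClosed (F n)) (hFN : ∀ n, F n ⊆ N) (hrank : ℵ₀ < Module.rank R (M ⧸ N)) :
    ∃ W v, IsGoodSeq p F N W v := by
  obtain ⟨s, hs⟩ := exists_seq_forall_of_forall_exists (α := Set M × M)
    (fun s j a => IsGoodStep p F N (fun i => (s i).1) (fun i => (s i).2) j a.1 a.2)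
    (fun s t j a hst h => h.congr (fun i hi => by rw [hst i hi]) (fun i hi => by rw [hst i hi]))
    (fun s j hprev => by
      obtain ⟨Wj, vj, h⟩ := exists_isGoodStep hcompact hF hFN hrank
        (fun i hi => (hprev i hi).mem_nhds)
        (linearIndepOn_Iio_of_notMem_span fun i hi => (hprev i hi).mkQ_notMem_span)
      exact ⟨(Wj, vj), h⟩)
  exact ⟨_, _, hs⟩

/-- A junk value when the partial sums diverge. -/
noncomputable def seriesSum (v : ℕ → M) (x : ℕ → R) : M :=
  limUnder atTop fun j => ∑ k ∈ Finset.range j, x k • v k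

namespace IsGoodSeq

variable {W : ℕ → Set M} {v : ℕ → M} {x : ℕ → R}

theorem zero_mem (h : IsGoodSeq p F N W v) (j : ℕ) : (0 : M) ∈ W j :=
  mem_of_mem_nhds (h j).mem_nhds

theorem add_mem_of_succ (h : IsGoodSeq p F N W v) {i : ℕ} {a b : M} (ha : a ∈ W (i + 1))
    (hb : b ∈ W (i + 1)) : a + b ∈ W i :=
  (h (i + 1)).add_mem i (lt_add_one i) a ha b hb

theorem sum_mem (h : IsGoodSeq p F N W v) {c L : ℕ} {a : ℕ → M}
    (ha : ∀ k < L, a k ∈ W (c + 1 + k)) : ∑ k ∈ Finset.range L, a k ∈ W c := by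
  induction L generalizing c a with
  | zero => simpa using h.zero_mem c
  | succ L ih =>
    rw [Finset.sum_range_succ']
    refine h.add_mem_of_succ (ih fun k hk => ?_) (ha 0 (by omega))
    simpa only [add_assoc, add_comm 1] using ha (k + 1) (by omega)

theorem smul_mem_of_mem_coeffBox (h : IsGoodSeq p F N W v) {j : ℕ} (hx : x ∈ coeffBox p j) :
    x j • v j ∈ W j :=
  (h j).smul_mem _ ((hx j).trans (by gcongr; linarith))

theorem dist_partialSum_lt (h : IsGoodSeq p F N W v) {j : ℕ} (hx : x ∈ coeffBox p j) :
    dist (∑ k ∈ Finset.range (j + 1), x k • v k) (∑ k ∈ Finset.range j, x k • v k) < 2⁻¹ ^ j := by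
  rw [Finset.sum_range_succ]
  exact (h j).dist_add_lt x hx _ (h.smul_mem_of_mem_coeffBox hx)

theorem cauchySeq_partialSum (h : IsGoodSeq p F N W v) {B : ℝ} (hx : x ∈ coeffBox p B) :
    CauchySeq fun j => ∑ k ∈ Finset.range j, x k • v k := by
  obtain ⟨J, hJ⟩ := (eventually_mem_coeffBox hx).exists_forall_of_atTop
  rw [← cauchySeq_shift J]
  refine cauchySeq_of_le_geometric 2⁻¹ 1 (by norm_num) fun n => ?_
  rw [dist_comm, add_right_comm]
  calc _ ≤ (2⁻¹ : ℝ) ^ (n + J) := (h.dist_partialSum_lt (hJ _ (by omega))).le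
    _ ≤ 1 * 2⁻¹ ^ n := by
      rw [one_mul]
      exact pow_le_pow_of_le_one (by norm_num) (by norm_num) (by omega)

theorem subset_closedBall (h : IsGoodSeq p F N W v) (j : ℕ) :
    W j ⊆ Metric.closedBall 0 (2⁻¹ ^ j) := fun w hw => by
  simpa [dist_comm] using ((h j).dist_add_lt 0 (zero_mem_coeffBox (by positivity)) w hw).le

theorem exists_subset (h : IsGoodSeq p F N W v) {V : Set M} (hV : V ∈ 𝓝 0) : ∃ j, W j ⊆ V := by
  obtain ⟨ε, hε, hball⟩ := Metric.mem_nhds_iff.1 hV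
  obtain ⟨j, hj⟩ := exists_pow_lt_of_lt_one hε (by norm_num : (2⁻¹ : ℝ) < 1)
  exact ⟨j, (h.subset_closedBall j).trans ((Metric.closedBall_subset_ball hj).trans hball)⟩

variable [CompleteSpace M]

theorem tendsto_seriesSum (h : IsGoodSeq p F N W v) {B : ℝ} (hx : x ∈ coeffBox p B) :
    Tendsto (fun j => ∑ k ∈ Finset.range j, x k • v k) atTop (𝓝 (seriesSum v x)) :=
  (h.cauchySeq_partialSum hx).tendsto_limUnder

theorem seriesSum_smul [TopologicalSpace R] [ContinuousSMul R M] (h : IsGoodSeq p F N W v)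
    {B : ℝ} (hx : x ∈ coeffBox p B) (r : R) :
    seriesSum v (r • x) = r • seriesSum v x :=
  ((h.tendsto_seriesSum hx).const_smul r).congr
    (fun j => by simp [Finset.smul_sum, mul_smul]) |>.limUnder_eq

variable [IsTopologicalAddGroup M]

theorem seriesSum_add (h : IsGoodSeq p F N W v) {y : ℕ → R} {B B' : ℝ} (hx : x ∈ coeffBox p B)
    (hy : y ∈ coeffBox p B') : seriesSum v (x + y) = seriesSum v x + seriesSum v y :=
  ((h.tendsto_seriesSum hx).add (h.tendsto_seriesSum hy)).congr
    (fun j => by simp [add_smul, Finset.sum_add_distrib]) |>.limUnder_eq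

theorem seriesSum_sub (h : IsGoodSeq p F N W v) {y : ℕ → R} {B B' : ℝ} (hx : x ∈ coeffBox p B)
    (hy : y ∈ coeffBox p B') : seriesSum v (x - y) = seriesSum v x - seriesSum v y :=
  ((h.tendsto_seriesSum hx).sub (h.tendsto_seriesSum hy)).congr
    (fun j => by simp [sub_smul, Finset.sum_sub_distrib]) |>.limUnder_eq

theorem seriesSum_sub_partialSum_mem (h : IsGoodSeq p F N W v) {j : ℕ} (hx : x ∈ coeffBox p j) :
    seriesSum v x - ∑ k ∈ Finset.range (j + 1), x k • v k ∈ W j := by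
  refine (h j).isClosed.mem_of_tendsto ((h.tendsto_seriesSum hx).sub_const _)
    (eventually_atTop.2 ⟨j + 1, fun l hl => ?_⟩)
  obtain ⟨L, rfl⟩ := Nat.exists_eq_add_of_le hl
  rw [Finset.sum_range_add_sub_sum_range]
  exact h.sum_mem fun k _ => h.smul_mem_of_mem_coeffBox (coeffBox_mono (by push_cast; linarith) hx)

theorem eventually_seriesSum_mem [TopologicalSpace R] [ContinuousSMul R M]
    (hball : ∀ U ∈ 𝓝 (0 : R), ∃ ε > 0, ∀ r, p r < ε → r ∈ U) (h : IsGoodSeq p F N W v) (c : ℕ) :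
    ∀ᶠ δ in 𝓝[>] (0 : ℝ), ∀ z ∈ coeffBox p δ, seriesSum v z ∈ W c := by
  have hsmall : ∀ᶠ δ in 𝓝[>] (0 : ℝ), ∀ k ∈ Finset.range (c + 1 + 1), ∀ r, p r ≤ δ * k ! →
      r • v k ∈ W (c + 1 + 1 + k) := (Finset.eventually_all _).2 fun k _ =>
    eventually_forall_smul_mem_of_le hball (v k) (h _).mem_nhds _
  have hle : ∀ᶠ δ in 𝓝[>] (0 : ℝ), δ ≤ (c : ℝ) + 1 :=
    (eventually_le_nhds (by positivity)).filter_mono nhdsWithin_le_nhds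
  filter_upwards [hsmall, hle] with δ hδ hδc z hz
  have htail := h.seriesSum_sub_partialSum_mem (j := c + 1)
    (coeffBox_mono (by push_cast; linarith) hz)
  have hhead : ∑ k ∈ Finset.range (c + 1 + 1), z k • v k ∈ W (c + 1) :=
    h.sum_mem fun k hk => hδ k (Finset.mem_range.2 hk) _ (hz k)
  simpa using h.add_mem_of_succ htail hhead

theorem seriesSum_notMem [TopologicalSpace R] [ContinuousSMul R M] (h : IsGoodSeq p F N W v)
    (hNF : (N : Set M) ⊆ ⋃ n, F n) {B : ℝ} (hx : x ∈ coeffBox p B) (hx0 : x ≠ 0) :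
    seriesSum v x ∉ N := by
  classical
  intro hxN
  have hex : ∃ k, x k ≠ 0 := by
    by_contra! h0
    exact hx0 (funext h0)
  set k₀ := Nat.find hex
  set y := (x k₀)⁻¹ • x
  have hy : y ∈ coeffBox p (p (x k₀)⁻¹ * B) := smul_mem_coeffBox _ hx
  have hyk₀ : y k₀ = 1 := inv_mul_cancel₀ (Nat.find_spec hex)
  have hylt : ∀ k < k₀, y k = 0 := fun k hk => by
    simp [y, not_not.1 (Nat.find_min hex hk)]
  have hyN : seriesSum v y ∈ N := by
    rw [h.seriesSum_smul hx]
    exact N.smul_mem _ hxN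
  obtain ⟨n, hn⟩ := mem_iUnion.1 (hNF hyN)
  obtain ⟨j, hjn, hjk, hjy⟩ := ((eventually_gt_atTop n).and
    ((eventually_gt_atTop k₀).and (eventually_mem_coeffBox hy))).exists
  refine (h j).add_notMem n hjn k₀ hjk y hjy _ (h.smul_mem_of_mem_coeffBox hjy) _
    (h.seriesSum_sub_partialSum_mem hjy) ?_
  rwa [← sum_range_smul_eq_add_sum_Ico hylt hyk₀ hjk, ← add_assoc, ← Finset.sum_range_succ,
    add_sub_cancel]

end IsGoodSeq

end Series

theorem exists_l1_map_of_aleph0_lt_rank {R M : Type*} [DivisionRing R] [TopologicalSpace R]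
    {p : RingSeminorm R} (hball : ∀ U ∈ 𝓝 (0 : R), ∃ ε > 0, ∀ r, p r < ε → r ∈ U)
    (hcompact : ∀ B, IsCompact {r : R | p r ≤ B}) [AddCommGroup M] [Module R M] [MetricSpace M]
    [CompleteSpace M] [IsTopologicalAddGroup M] [ContinuousSMul R M]
    [TopologicalSpace.SeparableSpace M] {N : Submodule R M} {F : ℕ → Set M}
    (hF : ∀ n, IsClosed (F n)) (hN : (N : Set M) = ⋃ n, F n)
    (hrank : ℵ₀ < Module.rank R (M ⧸ N)) :
    ∃ f : {x : ℕ → R // MemL1 p x} → M,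
      (∀ (x y : {x : ℕ → R // MemL1 p x}) (h : MemL1 p (x.1 + y.1)),
        f ⟨x.1 + y.1, h⟩ = f x + f y) ∧
      (∀ (r : R) (x : {x : ℕ → R // MemL1 p x}) (h : MemL1 p (r • x.1)),
        f ⟨r • x.1, h⟩ = r • f x) ∧
      (∀ x : {x : ℕ → R // MemL1 p x}, ∀ U ∈ 𝓝 (f x),
        ∃ δ > 0, ∀ y : {x : ℕ → R // MemL1 p x}, l1Norm p (y.1 - x.1) < δ → f y ∈ U) ∧
      (∀ x y : {x : ℕ → R // MemL1 p x}, f x - f y ∈ N → x = y) := by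
  obtain ⟨W, v, h⟩ := exists_isGoodSeq hcompact hF (fun n => hN ▸ subset_iUnion F n) hrank
  have hbox : ∀ x : {x : ℕ → R // MemL1 p x}, x.1 ∈ coeffBox p (l1Norm p x.1) :=
    fun x => x.2.mem_coeffBox
  refine ⟨fun x => seriesSum v x.1, fun x y _ => h.seriesSum_add (hbox x) (hbox y),
    fun r x _ => h.seriesSum_smul (hbox x) r, fun x U hU => ?_, fun x y hxy => ?_⟩
  · obtain ⟨c, hc⟩ := h.exists_subset
      ((continuous_const.add continuous_id).tendsto' 0 _ (add_zero _) hU)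
    obtain ⟨δ, hδ, hδ0⟩ := ((h.eventually_seriesSum_mem hball c).and self_mem_nhdsWithin).exists
    refine ⟨δ, hδ0, fun y hy => ?_⟩
    have := hc (hδ _ (coeffBox_mono hy.le (y.2.sub x.2).mem_coeffBox))
    rw [h.seriesSum_sub (hbox y) (hbox x)] at this
    simpa using this
  · by_contra hne
    refine h.seriesSum_notMem hN.subset (x.2.sub y.2).mem_coeffBox
      (sub_ne_zero.2 (Subtype.coe_injective.ne hne)) ?_
    rwa [h.seriesSum_sub (hbox x) (hbox y)]

theorem stmt_15_general (R : Type*) [DivisionRing R] [TopologicalSpace R]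
    (ν : R → ℝ)
    -- ν is a proper norm on the division ring R, inducing its topology:
    (hzero : ∀ a, ν a = 0 ↔ a = 0)
    (hneg : ∀ a, ν (-a) = ν a)
    (hadd : ∀ a b, ν (a + b) ≤ ν a + ν b)
    (hmul : ∀ a b, ν (a * b) ≤ ν a * ν b)
    (htop : ∀ s : Set R, IsOpen s ↔ ∀ a ∈ s, ∃ ε > 0, ∀ b, ν (b - a) < ε → b ∈ s)
    (hproper : ∀ (a : R) (ε : ℝ), IsCompact {b : R | ν (b - a) ≤ ε})
    -- M is a Polish topological R-vector space:
    (M : Type*) [AddCommGroup M] [Module R M] [TopologicalSpace M]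
    [IsTopologicalAddGroup M] [ContinuousSMul R M] [PolishSpace M]
    -- N is an F_σ vector subspace of M:
    (N : Submodule R M)
    (hFsigma : ∃ F : ℕ → Set M, (∀ n, IsClosed (F n)) ∧ (N : Set M) = ⋃ n, F n) :
    -- exactly one of the following holds:
    Xor
      -- (1) dim_R(M/N) is countable:
      (Module.rank R (M ⧸ N) ≤ Cardinal.aleph0)
      -- (2) there is a continuous R-linear map ℓ¹(R) → M descending to an
      --     injection ℓ¹(R) → M/N:
      (∃ f : {x : ℕ → R // MemL1 ν x} → M,
        (∀ (x y : {x : ℕ → R // MemL1 ν x}) (h : MemL1 ν (x.1 + y.1)),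
          f ⟨x.1 + y.1, h⟩ = f x + f y) ∧
        (∀ (r : R) (x : {x : ℕ → R // MemL1 ν x}) (h : MemL1 ν (r • x.1)),
          f ⟨r • x.1, h⟩ = r • f x) ∧
        (∀ x : {x : ℕ → R // MemL1 ν x}, ∀ U ∈ nhds (f x),
          ∃ δ > 0, ∀ y : {x : ℕ → R // MemL1 ν x},
            l1Norm ν (y.1 - x.1) < δ → f y ∈ U) ∧
        (∀ x y : {x : ℕ → R // MemL1 ν x}, f x - f y ∈ N → x = y)) := by
  let p : RingSeminorm R :=
    { toFun := ν, map_zero' := (hzero 0).2 rfl, add_le' := hadd, neg' := hneg, mul_le' := hmul }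
  by_cases hrank : Module.rank R (M ⧸ N) ≤ ℵ₀
  · refine Or.inl ⟨hrank, fun ⟨f, hfadd, hfsmul, _, hfinj⟩ => ?_⟩
    exact (aleph0_lt_rank_quotient_of_l1 (p := p) N f hfadd hfsmul hfinj).not_ge hrank
  · have hball : ∀ U ∈ 𝓝 (0 : R), ∃ ε > 0, ∀ r, p r < ε → r ∈ U := fun U hU => by
      obtain ⟨O, hOU, hO, h0O⟩ := mem_nhds_iff.1 hU
      obtain ⟨ε, hε, hεO⟩ := (htop O).1 hO 0 h0O
      exact ⟨ε, hε, fun r hr => hOU (hεO r (by rwa [sub_zero]))⟩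
    obtain ⟨F, hF, hN⟩ := hFsigma
    have hcompact : ∀ B, IsCompact {r : R | p r ≤ B} := fun B => by
      have := hproper 0 B
      simp only [sub_zero] at this
      exact this
    let := TopologicalSpace.upgradeIsCompletelyMetrizable M
    exact Or.inr ⟨exists_l1_map_of_aleph0_lt_rank hball hcompact hF hN (not_le.1 hrank), hrank⟩

theorem stmt_15 (R : Type*) [DivisionRing R] [TopologicalSpace R]
    [IsTopologicalRing R] (ν : R → ℝ)
    -- ν is a proper norm on the division ring R, inducing its topology:
    (hnonneg : ∀ a, 0 ≤ ν a)
    (hzero : ∀ a, ν a = 0 ↔ a = 0)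
    (hneg : ∀ a, ν (-a) = ν a)
    (hadd : ∀ a b, ν (a + b) ≤ ν a + ν b)
    (hmul : ∀ a b, ν (a * b) ≤ ν a * ν b)
    (htop : ∀ s : Set R, IsOpen s ↔ ∀ a ∈ s, ∃ ε > 0, ∀ b, ν (b - a) < ε → b ∈ s)
    (hproper : ∀ (a : R) (ε : ℝ), IsCompact {b : R | ν (b - a) ≤ ε})
    -- M is a Polish topological R-vector space:
    (M : Type*) [AddCommGroup M] [Module R M] [TopologicalSpace M]
    [IsTopologicalAddGroup M] [ContinuousSMul R M] [PolishSpace M]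
    -- N is an F_σ vector subspace of M:
    (N : Submodule R M)
    (hFsigma : ∃ F : ℕ → Set M, (∀ n, IsClosed (F n)) ∧ (N : Set M) = ⋃ n, F n) :
    -- exactly one of the following holds:
    Xor
      -- (1) dim_R(M/N) is countable:
      (Module.rank R (M ⧸ N) ≤ Cardinal.aleph0)
      -- (2) there is a continuous R-linear map ℓ¹(R) → M descending to an
      --     injection ℓ¹(R) → M/N:
      (∃ f : {x : ℕ → R // MemL1 ν x} → M,
        (∀ (x y : {x : ℕ → R // MemL1 ν x}) (h : MemL1 ν (x.1 + y.1)),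
          f ⟨x.1 + y.1, h⟩ = f x + f y) ∧
        (∀ (r : R) (x : {x : ℕ → R // MemL1 ν x}) (h : MemL1 ν (r • x.1)),
          f ⟨r • x.1, h⟩ = r • f x) ∧
        (∀ x : {x : ℕ → R // MemL1 ν x}, ∀ U ∈ nhds (f x),
          ∃ δ > 0, ∀ y : {x : ℕ → R // MemL1 ν x},
            l1Norm ν (y.1 - x.1) < δ → f y ∈ U) ∧
        (∀ x y : {x : ℕ → R // MemL1 ν x}, f x - f y ∈ N → x = y)) :=
  stmt_15_general R ν hzero hneg hadd hmul htop hproper M N hFsigma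
end

section
/- Let R be a left-Noetherian countable discrete ring with a proper norm, and let M be a Polish R-module. If M is uncountable, then there is a proper two-sided ideal I ◁ R and a continuous R-linear map ℓ¹(R) → M whose kernel is exactly ℓ¹(I) = ℓ¹(R) ∩ I^ℕ; in particular there is an injective R-linear map ℓ¹(R/I) → M. -/
open Filter Topology TopologicalSpace Finset Pointwise
open scoped Nat

theorem exists_seq_forall_of_step {D : Type*} [Nonempty D] (C : ℕ → (ℕ → D) → Prop)
    (hC : ∀ j (h h' : ℕ → D), (∀ i ≤ j, h i = h' i) → C j h → C j h')
    (hstep : ∀ k (h : ℕ → D), (∀ j < k, C j h) → ∃ d, C k (Function.update h k d)) :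
    ∃ g : ℕ → D, ∀ j, C j g := by
  classical
  choose! next hnext using hstep
  let F : ℕ → ℕ → D := fun k =>
    Nat.rec (fun _ => Classical.arbitrary D) (fun k h => Function.update h k (next k h)) k
  have hF_succ : ∀ k i, i ≠ k → F (k + 1) i = F k i := fun k i hi =>
    Function.update_of_ne hi _ _
  have hF : ∀ k, ∀ j < k, C j (F k) := by
    intro k
    induction k with
    | zero => intro j hj; omega
    | succ k ih =>
      intro j hj
      rcases Nat.lt_succ_iff_lt_or_eq.mp hj with hj | rfl
      · exact hC j _ _ (fun i hi => (hF_succ k i (by omega)).symm) (ih j hj)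
      · exact hnext j (F j) ih
  have hF_stable : ∀ k i, i < k → F k i = F (i + 1) i := by
    intro k
    induction k with
    | zero => intro i hi; omega
    | succ k ih =>
      intro i hi
      rcases Nat.lt_succ_iff_lt_or_eq.mp hi with hi | rfl
      · rw [hF_succ k i hi.ne]; exact ih i hi
      · rfl
  exact ⟨fun i => F (i + 1) i, fun j =>
    hC j _ _ (fun i hi => hF_stable (j + 1) i (by omega)) (hF (j + 1) j (lt_add_one j))⟩

section TopologicalAddGroup

variable {G H : Type*} [AddCommGroup G] [TopologicalSpace G] [IsTopologicalAddGroup G]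
  [AddCommGroup H]

theorem Dense.exists_sub_mem {D U : Set G} (hD : Dense D) (hU : U ∈ 𝓝 0) (x : G) :
    ∃ d ∈ D, d - x ∈ U :=
  hD.inter_nhds_nonempty <|
    (continuous_sub_right x).continuousAt.preimage_mem_nhds (by rwa [sub_self])

theorem countable_of_countable_mem_nhds_zero [SeparableSpace G] {U : Set G} (hU : U ∈ 𝓝 0)
    (hUc : U.Countable) : Countable G := by
  obtain ⟨D, hDc, hD⟩ := TopologicalSpace.exists_countable_dense G
  refine Set.countable_univ_iff.mp <|
    (hDc.biUnion fun d _ => hUc.image (d - ·)).mono fun x _ => ?_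
  obtain ⟨d, hdD, hdx⟩ := hD.exists_sub_mem hU x
  exact Set.mem_biUnion hdD ⟨d - x, hdx, sub_sub_cancel d x⟩

theorem AddMonoidHom.countable_range_of_ker_mem_nhds [SeparableSpace G] (f : G →+ H)
    (hf : (f.ker : Set G) ∈ 𝓝 0) : (Set.range f).Countable := by
  obtain ⟨D, hDc, hD⟩ := TopologicalSpace.exists_countable_dense G
  refine (hDc.image f).mono ?_
  rintro _ ⟨x, rfl⟩
  obtain ⟨d, hdD, hdx⟩ := hD.exists_sub_mem hf x
  exact ⟨d, hdD, sub_eq_zero.mp (by simpa using hdx)⟩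

theorem AddMonoidHom.ker_mem_nhds_of_mem_interior_fiber (f : G →+ H) {x : G} {c : H}
    (hx : x ∈ interior (f ⁻¹' {c})) : (f.ker : Set G) ∈ 𝓝 0 := by
  have hc : f x = c := interior_subset (s := f ⁻¹' {c}) hx
  refine mem_of_superset ((continuous_add_const x).continuousAt.preimage_mem_nhds
    (by rwa [zero_add, ← mem_interior_iff_mem_nhds])) fun g hg => ?_
  simpa [hc] using hg

theorem AddMonoidHom.ker_mem_nhds_of_countable_range [BaireSpace G] [TopologicalSpace H]
    [T1Space H] (f : G →+ H) (hf : Continuous f) (hrange : (Set.range f).Countable) :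
    (f.ker : Set G) ∈ 𝓝 0 := by
  have := hrange.to_subtype
  obtain ⟨c, x, hx⟩ := nonempty_interior_of_iUnion_of_closed
    (f := fun c : Set.range f => f ⁻¹' {(c : H)}) (fun c => isClosed_singleton.preimage hf)
    (Set.eq_univ_of_forall fun x => Set.mem_iUnion.mpr ⟨⟨f x, x, rfl⟩, rfl⟩)
  exact f.ker_mem_nhds_of_mem_interior_fiber hx

theorem AddMonoidHom.dense_setOf_ne [SeparableSpace G] (f : G →+ H)
    (hrange : ¬ (Set.range f).Countable) (c : H) : Dense {g | f g ≠ c} := by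
  show Dense (f ⁻¹' {c})ᶜ
  rw [← interior_eq_empty_iff_dense_compl, Set.eq_empty_iff_forall_notMem]
  exact fun x hx => hrange (f.countable_range_of_ker_mem_nhds
    (f.ker_mem_nhds_of_mem_interior_fiber hx))

end TopologicalAddGroup

theorem exists_isOpen_closure_add_subset {G : Type*} [AddGroup G] [TopologicalSpace G]
    [IsTopologicalAddGroup G] {U : Set G} (hU : U ∈ 𝓝 0) :
    ∃ W, IsOpen W ∧ (0 : G) ∈ W ∧ closure (W + W) ⊆ U := by
  obtain ⟨F, hF, hFc, hFU⟩ := exists_mem_nhds_isClosed_subset hU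
  obtain ⟨W, hWo, hW0, hWF⟩ := exists_open_nhds_zero_add_subset hF
  exact ⟨W, hWo, hW0, (closure_minimal hWF hFc).trans hFU⟩

section Annihilator

variable {R : Type*} [Ring R] (M : Type*) [AddCommGroup M] [Module R M]

def annihilatedBy (I : Ideal R) : AddSubgroup M where
  carrier := {m | ∀ a ∈ I, a • m = 0}
  add_mem' hx hy a ha := by rw [smul_add, hx a ha, hy a ha, add_zero]
  zero_mem' a _ := smul_zero a
  neg_mem' hx a ha := by rw [smul_neg, hx a ha, neg_zero]

variable {M}

theorem mem_annihilatedBy {I : Ideal R} {m : M} : m ∈ annihilatedBy M I ↔ ∀ a ∈ I, a • m = 0 :=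
  Iff.rfl

theorem smul_mem_annihilatedBy {I : Ideal R} [I.IsTwoSided] (r : R) {m : M}
    (hm : m ∈ annihilatedBy M I) : r • m ∈ annihilatedBy M I := fun a ha => by
  rw [← mul_smul]
  exact hm _ (I.mul_mem_right r ha)

theorem isClosed_annihilatedBy [TopologicalSpace M] [T1Space M] [ContinuousConstSMul R M]
    (I : Ideal R) : IsClosed (annihilatedBy M I : Set M) := by
  have : (annihilatedBy M I : Set M) = ⋂ a ∈ I, (a • ·) ⁻¹' {0} := by
    ext; simp [mem_annihilatedBy]
  rw [this]
  exact isClosed_biInter fun a _ => isClosed_singleton.preimage (continuous_const_smul a)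

theorem annihilatedBy_top_subset : (annihilatedBy M (⊤ : Ideal R) : Set M) ⊆ {0} :=
  fun m hm => by simpa using hm 1 Submodule.mem_top

theorem annihilatedBy_bot : annihilatedBy M (⊥ : Ideal R) = ⊤ :=
  eq_top_iff.mpr fun m _ a ha => by rw [(Submodule.mem_bot R).mp ha, zero_smul]

variable (R) in
def countableSmulIdeal (S : AddSubgroup M) : Ideal R where
  carrier := {a | (Set.range fun s : S => a • (s : M)).Countable}
  add_mem' {a b} ha hb := (ha.image2 hb (· + ·)).mono <| by
    rintro _ ⟨s, rfl⟩
    exact ⟨_, ⟨s, rfl⟩, _, ⟨s, rfl⟩, (add_smul a b _).symm⟩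
  zero_mem' := (Set.countable_singleton 0).mono <| by
    rintro _ ⟨s, rfl⟩
    exact zero_smul R _
  smul_mem' c a ha := (ha.image (c • ·)).mono <| by
    rintro _ ⟨s, rfl⟩
    exact ⟨_, ⟨s, rfl⟩, (mul_smul c a _).symm⟩

theorem countableSmulIdeal_isTwoSided {S : AddSubgroup M} (hS : ∀ (r : R), ∀ m ∈ S, r • m ∈ S) :
    (countableSmulIdeal R S).IsTwoSided :=
  ⟨fun b ha => ha.mono <| by
    rintro _ ⟨s, rfl⟩
    exact ⟨⟨b • (s : M), hS b s s.2⟩, (mul_smul _ b _).symm⟩⟩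

theorem le_countableSmulIdeal {I : Ideal R} {S : AddSubgroup M} (hS : S ≤ annihilatedBy M I) :
    I ≤ countableSmulIdeal R S := fun a ha => (Set.countable_singleton 0).mono <| by
  rintro _ ⟨s, rfl⟩
  exact hS s.2 a ha

theorem not_countable_annihilatedBy_countableSmulIdeal [IsNoetherianRing R] [TopologicalSpace M]
    [IsTopologicalAddGroup M] [T1Space M] [ContinuousConstSMul R M] {S : AddSubgroup M}
    [BaireSpace S] [SeparableSpace S] (hS : ¬ (S : Set M).Countable) :
    ¬ (annihilatedBy M (countableSmulIdeal R S) : Set M).Countable := by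
  let f : R → S →+ M := fun a => (DistribSMul.toAddMonoidHom M a).comp S.subtype
  obtain ⟨g, hg⟩ := IsNoetherian.noetherian (countableSmulIdeal R S : Submodule R R)
  have hgT : ∀ a ∈ g, a ∈ countableSmulIdeal R S := fun a ha => hg ▸ Submodule.subset_span ha
  have hK : (⋂ a ∈ g, ((f a).ker : Set S)) ∈ 𝓝 0 :=
    (biInter_finset_mem g).mpr fun a ha => (f a).ker_mem_nhds_of_countable_range
      ((continuous_const_smul a).comp continuous_subtype_val) (hgT a ha)
  have hKann : ∀ s ∈ ⋂ a ∈ g, ((f a).ker : Set S),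
      (s : M) ∈ annihilatedBy M (countableSmulIdeal R S) := by
    intro s hs b hb
    have hspan :
        Submodule.span R (g : Set R) ≤ LinearMap.ker (LinearMap.toSpanSingleton R M s) :=
      Submodule.span_le.mpr fun a ha => by
        simpa [f] using Set.mem_iInter₂.mp hs a ha
    simpa using hspan (hg.symm ▸ hb)
  intro hc
  have := countable_of_countable_mem_nhds_zero hK
    ((hc.preimage Subtype.val_injective).mono hKann)
  exact hS (Set.countable_coe_iff.mp this)

end Annihilator

theorem exists_isTwoSided_forall_dense_smul_ne {R : Type*} [Ring R] [IsNoetherianRing R]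
    {M : Type*} [AddCommGroup M] [Module R M] [TopologicalSpace M] [PolishSpace M]
    [IsTopologicalAddGroup M] [ContinuousConstSMul R M] (hM : ¬ Countable M) :
    ∃ I : Ideal R, I ≠ ⊤ ∧ I.IsTwoSided ∧
      ∀ r ∉ I, ∀ c : M, Dense {s : annihilatedBy M I | r • (s : M) ≠ c} := by
  obtain ⟨I, ⟨hI2, hIc⟩, hImax⟩ := set_has_maximal_iff_noetherian.mpr
    (inferInstance : IsNoetherian R R)
    {J : Ideal R | J.IsTwoSided ∧ ¬ (annihilatedBy M J : Set M).Countable}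
    ⟨⊥, ⟨fun b ha => by simp_all⟩, by simpa [annihilatedBy_bot, Set.countable_univ_iff] using hM⟩
  refine ⟨I, ?_, hI2, fun r hr c => ?_⟩
  · rintro rfl
    exact hIc ((Set.countable_singleton 0).mono annihilatedBy_top_subset)
  set S := annihilatedBy M I
  have : PolishSpace S := (isClosed_annihilatedBy I).polishSpace
  have hT2 : (countableSmulIdeal R S).IsTwoSided :=
    countableSmulIdeal_isTwoSided fun r _ hm => smul_mem_annihilatedBy r hm
  have hIT : I = countableSmulIdeal R S := (le_countableSmulIdeal le_rfl).eq_of_not_lt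
    (hImax _ ⟨hT2, not_countable_annihilatedBy_countableSmulIdeal hIc⟩)
  rw [hIT] at hr
  exact ((DistribSMul.toAddMonoidHom M r).comp S.subtype).dense_setOf_ne hr c

section ProperNorm

variable {R : Type*} {ν : R → ℝ}

theorem exists_pos_forall_lt_imp_eq_zero [Zero R] (hν : ∀ a, 0 ≤ ν a)
    (hzero : ∀ a, ν a = 0 ↔ a = 0) (hfin : ∀ b, {r | ν r ≤ b}.Finite) :
    ∃ c > 0, ∀ r, ν r < c → r = 0 := by
  rcases ({r | ν r ≤ 1} \ {0}).eq_empty_or_nonempty with hT | hT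
  · refine ⟨1, one_pos, fun r hr => by_contra fun h => ?_⟩
    exact hT.subset ⟨hr.le, h⟩
  · obtain ⟨a, ⟨ha1, ha0⟩, hmin⟩ := Set.exists_min_image _ ν ((hfin 1).sdiff) hT
    refine ⟨ν a, (hν a).lt_of_ne (Ne.symm ((hzero a).not.mpr ha0)), fun r hr => ?_⟩
    by_contra h
    exact (hmin r ⟨hr.le.trans ha1, h⟩).not_gt hr

variable {x y : ℕ → R}

theorem MemL1.sub_s16 [AddGroup R] (hν : ∀ a, 0 ≤ ν a) (hneg : ∀ a, ν (-a) = ν a)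
    (hadd : ∀ a b, ν (a + b) ≤ ν a + ν b) (hx : MemL1 ν x) (hy : MemL1 ν y) :
    MemL1 ν (x - y) :=
  Summable.of_nonneg_of_le (fun k => div_nonneg (hν _) k.factorial.cast_nonneg)
    (fun k => by
      rw [← add_div]
      gcongr
      simpa [sub_eq_add_neg, hneg] using hadd (x k) (-y k))
    (Summable.add hx hy)

theorem MemL1.le_l1Norm_mul_factorial (hν : ∀ a, 0 ≤ ν a) (hx : MemL1 ν x) (k : ℕ) :
    ν (x k) ≤ l1Norm ν x * k ! := by
  have := Summable.le_tsum hx k fun j _ => div_nonneg (hν _) j.factorial.cast_nonneg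
  rwa [div_le_iff₀ (by positivity)] at this

theorem MemL1.exists_le_mul_factorial (hν : ∀ a, 0 ≤ ν a) (hx : MemL1 ν x) :
    ∃ N : ℕ, ∀ k, ν (x k) ≤ N * k ! :=
  ⟨⌈l1Norm ν x⌉₊, fun k =>
    (hx.le_l1Norm_mul_factorial hν k).trans (by gcongr; exact Nat.le_ceil _)⟩

end ProperNorm

section Construction

variable {R : Type*} [Ring R] {M : Type*} [AddCommGroup M] [Module R M]

theorem sum_range_smul_congr {m m' : ℕ → M} {n : ℕ} (h : ∀ i < n, m i = m' i) (x : ℕ → R) :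
    ∑ i ∈ range n, x i • m i = ∑ i ∈ range n, x i • m' i :=
  sum_congr rfl fun i hi => by rw [h i (mem_range.mp hi)]

theorem finite_image_sum_range {ν : R → ℝ} (hfin : ∀ b, {r | ν r ≤ b}.Finite) (m : ℕ → M)
    (k : ℕ) (B : ℕ → ℝ) :
    ((fun x : ℕ → R => ∑ i ∈ range k, x i • m i) '' {x | ∀ i < k, ν (x i) ≤ B i}).Finite := by
  refine ((Set.Finite.pi (t := fun i : Fin k => {r | ν r ≤ B i}) fun i => hfin _).image
    fun v : Fin k → R => ∑ i, v i • m i).subset ?_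
  rintro _ ⟨x, hx, rfl⟩
  exact ⟨fun i => x i, fun i _ => hx i i.2, Fin.sum_univ_eq_sum_range (fun i => x i • m i) k⟩

theorem countable_range_sum_range [Countable R] (m : ℕ → M) (k : ℕ) :
    (Set.range fun x : ℕ → R => ∑ i ∈ range k, x i • m i).Countable :=
  (Set.countable_range fun v : Fin k → R => ∑ i, v i • m i).mono <| by
    rintro _ ⟨x, rfl⟩
    exact ⟨fun i => x i, Fin.sum_univ_eq_sum_range (fun i => x i • m i) k⟩

theorem exists_mem_forall_smul_add_ne_zero [Countable R] [TopologicalSpace M] [T1Space M]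
    [ContinuousConstSMul R M] {I : Ideal R} {S : AddSubgroup M} [BaireSpace S]
    (hS : ∀ r ∉ I, ∀ c : M, Dense {s : S | r • (s : M) ≠ c}) {H : Set M} (hH : H.Countable)
    {p : M → Prop} (hp : ∀ᶠ m in 𝓝 0, p m) :
    ∃ m ∈ S, p m ∧ ∀ r ∉ I, ∀ h ∈ H, r • m + h ≠ 0 := by
  have := hH.to_subtype
  have hdense : Dense (⋂ q : {r // r ∉ I} × H, {s : S | (q.1 : R) • (s : M) ≠ -q.2}) :=
    dense_iInter_of_isOpen (fun q => isOpen_compl_singleton.preimage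
      ((continuous_const_smul _).comp continuous_subtype_val)) fun q => hS q.1 q.1.2 _
  obtain ⟨s, hs, hsp⟩ := hdense.inter_nhds_nonempty (x := 0)
    (continuous_subtype_val.continuousAt.preimage_mem_nhds hp)
  refine ⟨s, s.2, hsp, fun r hr h hh => ?_⟩
  rw [Ne, add_eq_zero_iff_eq_neg]
  exact Set.mem_iInter.mp hs ⟨⟨r, hr⟩, ⟨h, hh⟩⟩

theorem sum_range_add_smul_ne_zero {I : Ideal R} {m : ℕ → M} {k : ℕ} {mk : M}
    (hind : ∀ x : ℕ → R, (∃ i < k, x i ∉ I) → ∑ i ∈ range k, x i • m i ≠ 0)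
    (hk : mk ∈ annihilatedBy M I)
    (hgen : ∀ r ∉ I, ∀ x : ℕ → R, r • mk + ∑ i ∈ range k, x i • m i ≠ 0)
    (x : ℕ → R) (hx : ∃ i ≤ k, x i ∉ I) : ∑ i ∈ range k, x i • m i + x k • mk ≠ 0 := by
  by_cases hxk : x k ∈ I
  · rw [mem_annihilatedBy.mp hk _ hxk, add_zero]
    obtain ⟨i, hi, hxi⟩ := hx
    exact hind x ⟨i, hi.lt_of_ne (by rintro rfl; exact hxi hxk), hxi⟩
  · rw [add_comm]
    exact hgen _ hxk x

variable [MetricSpace M] (ν : R → ℝ) (I : Ideal R)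

/-- Stage `j` of the construction. Every `x ∈ ℓ¹(R)` satisfies the coefficient bound `j * i !`
once `j ≥ l1Norm ν x`, and only finitely many `(x 0, …, x (j - 1))` satisfy it. As the complete
metric need not be translation invariant, `dist_sum_le` imposes the Cauchy estimate directly. -/
structure IsGoodStage (V : ℕ → Set M) (m : ℕ → M) (j : ℕ) : Prop where
  isOpen : IsOpen (V j)
  zero_mem : (0 : M) ∈ V j
  add_subset : ∀ i < j, V j + V j ⊆ V i
  closure_add_subset : closure (V j + V j) ⊆ Metric.ball 0 ((1 / 2) ^ j)
  mem_annihilatedBy : m j ∈ annihilatedBy M I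
  smul_mem : ∀ r, ν r ≤ j * j ! → r • m j ∈ V j
  sum_ne_zero : ∀ x : ℕ → R, (∃ i ≤ j, x i ∉ I) → ∑ i ∈ range (j + 1), x i • m i ≠ 0
  neg_sum_notMem : ∀ x : ℕ → R, (∀ i < j, ν (x i) ≤ j * i !) → (∃ i < j, x i ∉ I) →
    -∑ i ∈ range j, x i • m i ∉ closure (V j + V j)
  dist_sum_le : ∀ x : ℕ → R, (∀ i ≤ j, ν (x i) ≤ j * i !) →
    dist (∑ i ∈ range (j + 1), x i • m i) (∑ i ∈ range j, x i • m i) ≤ (1 / 2) ^ j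

variable {ν I}

theorem IsGoodStage.congr {V V' : ℕ → Set M} {m m' : ℕ → M} {j : ℕ}
    (hV : ∀ i ≤ j, V i = V' i) (hm : ∀ i ≤ j, m i = m' i) (h : IsGoodStage ν I V m j) :
    IsGoodStage ν I V' m' j := by
  have hsum := sum_range_smul_congr (R := R) fun i (hi : i < j) => hm i hi.le
  have hsum' :=
    sum_range_smul_congr (R := R) fun i (hi : i < j + 1) => hm i (Nat.lt_succ_iff.mp hi)
  have hVj := hV j le_rfl
  have hmj := hm j le_rfl
  exact
    { isOpen := hVj ▸ h.isOpen
      zero_mem := hVj ▸ h.zero_mem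
      add_subset := fun i hi => hVj ▸ hV i hi.le ▸ h.add_subset i hi
      closure_add_subset := hVj ▸ h.closure_add_subset
      mem_annihilatedBy := hmj ▸ h.mem_annihilatedBy
      smul_mem := fun r hr => hVj ▸ hmj ▸ h.smul_mem r hr
      sum_ne_zero := fun x hx => hsum' x ▸ h.sum_ne_zero x hx
      neg_sum_notMem := fun x hb hx => hVj ▸ hsum x ▸ h.neg_sum_notMem x hb hx
      dist_sum_le := fun x hb => hsum x ▸ hsum' x ▸ h.dist_sum_le x hb }

variable [IsTopologicalAddGroup M]

theorem exists_stage_nhd (hfin : ∀ b, {r | ν r ≤ b}.Finite) {V : ℕ → Set M} {m : ℕ → M}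
    {k : ℕ} (hV : ∀ i < k, V i ∈ 𝓝 0)
    (hind : ∀ x : ℕ → R, (∃ i < k, x i ∉ I) → ∑ i ∈ range k, x i • m i ≠ 0) :
    ∃ W, IsOpen W ∧ (0 : M) ∈ W ∧ (∀ i < k, W + W ⊆ V i) ∧
      closure (W + W) ⊆ Metric.ball 0 ((1 / 2) ^ k) ∧
      ∀ x : ℕ → R, (∀ i < k, ν (x i) ≤ k * i !) → (∃ i < k, x i ∉ I) →
        -∑ i ∈ range k, x i • m i ∉ closure (W + W) := by
  set P := (fun x : ℕ → R => -∑ i ∈ range k, x i • m i) ''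
    {x | (∀ i < k, ν (x i) ≤ k * i !) ∧ ∃ i < k, x i ∉ I}
  have hP : P.Finite := ((finite_image_sum_range hfin m k _).image Neg.neg).subset <| by
    rintro _ ⟨x, hx, rfl⟩
    exact ⟨_, ⟨x, hx.1, rfl⟩, rfl⟩
  have h0P : (0 : M) ∉ P := by
    rintro ⟨x, hx, h⟩
    exact hind x hx.2 (neg_eq_zero.mp h)
  obtain ⟨W, hWo, hW0, hW⟩ := exists_isOpen_closure_add_subset
    (U := Metric.ball 0 ((1 / 2) ^ k) ∩ (⋂ i ∈ range k, V i) ∩ Pᶜ) <|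
    inter_mem (inter_mem (Metric.ball_mem_nhds _ (by positivity))
      ((biInter_finset_mem _).mpr fun i hi => hV i (mem_range.mp hi)))
      (hP.isClosed.isOpen_compl.mem_nhds h0P)
  refine ⟨W, hWo, hW0, fun i hi z hz => ?_, fun z hz => (hW hz).1.1,
    fun x hb hx hmem => (hW hmem).2 ⟨x, ⟨hb, hx⟩, rfl⟩⟩
  exact Set.mem_iInter₂.mp (hW (subset_closure hz)).1.2 i (mem_range.mpr hi)

variable [ContinuousConstSMul R M]

theorem exists_stage_vector [Countable R] (hfin : ∀ b, {r | ν r ≤ b}.Finite)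
    {S : AddSubgroup M} [BaireSpace S] (hS : ∀ r ∉ I, ∀ c : M, Dense {s : S | r • (s : M) ≠ c})
    {W : Set M} (hW : W ∈ 𝓝 0) (m : ℕ → M) (k : ℕ) :
    ∃ mk ∈ S, (∀ r, ν r ≤ k * k ! → r • mk ∈ W ∧
        ∀ x : ℕ → R, (∀ i < k, ν (x i) ≤ k * i !) →
          dist (∑ i ∈ range k, x i • m i + r • mk) (∑ i ∈ range k, x i • m i) < (1 / 2) ^ k) ∧
      ∀ r ∉ I, ∀ x : ℕ → R, r • mk + ∑ i ∈ range k, x i • m i ≠ 0 := by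
  set Sums := (fun x : ℕ → R => ∑ i ∈ range k, x i • m i) '' {x | ∀ i < k, ν (x i) ≤ k * i !}
  have hnear : ∀ᶠ mk in 𝓝 (0 : M), ∀ r ∈ {r | ν r ≤ k * k !}, r • mk ∈ W ∧
      ∀ s ∈ Sums, dist (s + r • mk) s < (1 / 2) ^ k := by
    refine (hfin _).eventually_all.mpr fun r _ =>
      (((continuous_const_smul r).tendsto' 0 0 (smul_zero r)).eventually hW).and <|
        (finite_image_sum_range hfin m k _).eventually_all.mpr fun s _ => ?_
    exact ((continuous_const.add (continuous_const_smul r)).tendsto' 0 s (by simp)).eventually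
      (Metric.ball_mem_nhds s (by positivity))
  obtain ⟨mk, hmkS, hmk, hgen⟩ :=
    exists_mem_forall_smul_add_ne_zero hS (countable_range_sum_range (R := R) m k) hnear
  exact ⟨mk, hmkS, fun r hr => ⟨(hmk r hr).1, fun x hx => (hmk r hr).2 _ ⟨x, hx, rfl⟩⟩,
    fun r hr x => hgen r hr _ ⟨x, rfl⟩⟩

theorem exists_isGoodStage_update [Countable R] [CompleteSpace M]
    (hfin : ∀ b, {r | ν r ≤ b}.Finite)
    (hS : ∀ r ∉ I, ∀ c : M, Dense {s : annihilatedBy M I | r • (s : M) ≠ c})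
    (k : ℕ) (h : ℕ → Set M × M)
    (hprev : ∀ j < k, IsGoodStage ν I (fun i => (h i).1) (fun i => (h i).2) j) :
    ∃ d, IsGoodStage ν I (fun i => (Function.update h k d i).1)
      (fun i => (Function.update h k d i).2) k := by
  set m := fun i => (h i).2
  have hind : ∀ x : ℕ → R, (∃ i < k, x i ∉ I) → ∑ i ∈ range k, x i • m i ≠ 0 := by
    cases k with
    | zero => simp
    | succ k => exact fun x hx =>
        (hprev k (lt_add_one k)).sum_ne_zero x (by simpa [Nat.lt_succ_iff] using hx)
  obtain ⟨W, hWo, hW0, hWV, hWball, hWsum⟩ := exists_stage_nhd hfin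
    (fun i hi => (hprev i hi).isOpen.mem_nhds (hprev i hi).zero_mem) hind
  have : CompleteSpace (annihilatedBy M I) := (isClosed_annihilatedBy I).completeSpace_coe
  obtain ⟨mk, hmkS, hmkW, hgen⟩ := exists_stage_vector hfin hS (hWo.mem_nhds hW0) m k
  refine ⟨(W, mk), ?_⟩
  have hlt : ∀ i < k, Function.update h k (W, mk) i = h i := fun i hi =>
    Function.update_of_ne hi.ne _ _
  have hsum (x : ℕ → R) :
      ∑ i ∈ range k, x i • (Function.update h k (W, mk) i).2 = ∑ i ∈ range k, x i • m i :=
    sum_range_smul_congr (fun i hi => by rw [hlt i hi]) x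
  have hsum' (x : ℕ → R) : ∑ i ∈ range (k + 1), x i • (Function.update h k (W, mk) i).2 =
      ∑ i ∈ range k, x i • m i + x k • mk := by
    rw [sum_range_succ, hsum, Function.update_self]
  exact
    { isOpen := by simpa using hWo
      zero_mem := by simpa using hW0
      add_subset := fun i hi => by simpa [hlt i hi] using hWV i hi
      closure_add_subset := by simpa using hWball
      mem_annihilatedBy := by simpa using hmkS
      smul_mem := fun r hr => by simpa using (hmkW r hr).1
      sum_ne_zero := fun x hx => by
        rw [hsum']
        exact sum_range_add_smul_ne_zero hind hmkS hgen x hx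
      neg_sum_notMem := fun x hb hx => by simpa [hsum] using hWsum x hb hx
      dist_sum_le := fun x hb => by
        rw [hsum, hsum']
        exact ((hmkW (x k) (hb k le_rfl)).2 x fun i hi => hb i hi.le).le }

theorem exists_forall_isGoodStage [Countable R] [CompleteSpace M] (hfin : ∀ b, {r | ν r ≤ b}.Finite)
    (hS : ∀ r ∉ I, ∀ c : M, Dense {s : annihilatedBy M I | r • (s : M) ≠ c}) :
    ∃ (V : ℕ → Set M) (m : ℕ → M), ∀ j, IsGoodStage ν I V m j := by
  obtain ⟨g, hg⟩ := exists_seq_forall_of_step (D := Set M × M)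
    (fun j h => IsGoodStage ν I (fun i => (h i).1) (fun i => (h i).2) j)
    (fun j h h' hh =>
      IsGoodStage.congr (fun i hi => by rw [hh i hi]) fun i hi => by rw [hh i hi])
    (exists_isGoodStage_update hfin hS)
  exact ⟨_, _, hg⟩

end Construction

section SeriesMap

variable {R : Type*} [Ring R] {M : Type*} [AddCommGroup M] [Module R M] [MetricSpace M]
  {ν : R → ℝ} {I : Ideal R}

noncomputable def seriesMap (m : ℕ → M) (x : ℕ → R) : M :=
  limUnder atTop fun n => ∑ i ∈ range n, x i • m i

variable {V : ℕ → Set M} {m : ℕ → M} (hVm : ∀ j, IsGoodStage ν I V m j)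
include hVm

theorem sum_Ico_mem_add {x : ℕ → R} {N : ℕ} (hx : ∀ i ≥ N, ν (x i) ≤ i * i !) (J : ℕ) :
    ∑ i ∈ Ico N J, x i • m i ∈ V N + V N := by
  induction hn : J - N generalizing N with
  | zero =>
    rw [Ico_eq_empty_of_le (by omega), sum_empty]
    exact ⟨0, (hVm N).zero_mem, 0, (hVm N).zero_mem, add_zero 0⟩
  | succ n ih =>
    rw [sum_eq_sum_Ico_succ_bot (by omega)]
    exact Set.add_mem_add ((hVm N).smul_mem _ (hx N le_rfl)) <|
      (hVm (N + 1)).add_subset N (lt_add_one N) (ih (fun i hi => hx i (by omega)) (by omega))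

theorem sub_sum_range_mem_closure [IsTopologicalAddGroup M] {x : ℕ → R} {L : M}
    (hL : Tendsto (fun n => ∑ i ∈ range n, x i • m i) atTop (𝓝 L)) {N : ℕ}
    (hx : ∀ i ≥ N, ν (x i) ≤ i * i !) : L - ∑ i ∈ range N, x i • m i ∈ closure (V N + V N) := by
  refine mem_closure_of_tendsto (hL.sub_const _) (eventually_atTop.mpr ⟨N, fun J hJ => ?_⟩)
  rw [← sum_range_add_sum_Ico _ hJ, add_sub_cancel_left]
  exact sum_Ico_mem_add hVm hx J

theorem exists_tendsto_sum_range [CompleteSpace M] {x : ℕ → R} {N : ℕ}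
    (hx : ∀ i, ν (x i) ≤ N * i !) :
    ∃ L, Tendsto (fun n => ∑ i ∈ range n, x i • m i) atTop (𝓝 L) := by
  refine cauchySeq_tendsto_of_complete <| (cauchySeq_shift N).mp <|
    cauchySeq_of_le_geometric (1 / 2) ((1 / 2) ^ N) (by norm_num) fun n => ?_
  rw [dist_comm, add_right_comm]
  calc _ ≤ (1 / 2 : ℝ) ^ (n + N) := (hVm (n + N)).dist_sum_le x fun i _ =>
          (hx i).trans (by gcongr; exact_mod_cast Nat.le_add_left N n)
    _ = (1 / 2) ^ N * (1 / 2) ^ n := by ring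

theorem tendsto_seriesMap [CompleteSpace M] (hν : ∀ a, 0 ≤ ν a) {x : ℕ → R} (hx : MemL1 ν x) :
    Tendsto (fun n => ∑ i ∈ range n, x i • m i) atTop (𝓝 (seriesMap m x)) :=
  let ⟨_, hN⟩ := hx.exists_le_mul_factorial hν
  tendsto_nhds_limUnder (exists_tendsto_sum_range hVm hN)

variable [CompleteSpace M] (hν : ∀ a, 0 ≤ ν a)
include hν

theorem seriesMap_add [IsTopologicalAddGroup M] {x y : ℕ → R} (hx : MemL1 ν x) (hy : MemL1 ν y)
    (hxy : MemL1 ν (x + y)) :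
    seriesMap m (x + y) = seriesMap m x + seriesMap m y :=
  tendsto_nhds_unique (tendsto_seriesMap hVm hν hxy) <| by
    simpa only [Pi.add_apply, add_smul, sum_add_distrib] using
      (tendsto_seriesMap hVm hν hx).add (tendsto_seriesMap hVm hν hy)

theorem seriesMap_smul [ContinuousConstSMul R M] (r : R) {x : ℕ → R} (hx : MemL1 ν x)
    (hrx : MemL1 ν (r • x)) :
    seriesMap m (r • x) = r • seriesMap m x :=
  tendsto_nhds_unique (tendsto_seriesMap hVm hν hrx) <| by
    simpa only [Pi.smul_apply, smul_eq_mul, mul_smul, ← smul_sum] using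
      (tendsto_seriesMap hVm hν hx).const_smul r

theorem seriesMap_eq_zero_iff [IsTopologicalAddGroup M] {x : ℕ → R} (hx : MemL1 ν x) :
    seriesMap m x = 0 ↔ ∀ k, x k ∈ I := by
  constructor
  · intro h0
    by_contra! ⟨j, hj⟩
    obtain ⟨N₀, hN₀⟩ := hx.exists_le_mul_factorial hν
    set N := max N₀ (j + 1)
    have hb : ∀ i, ν (x i) ≤ N * i ! := fun i =>
      (hN₀ i).trans (by gcongr; exact_mod_cast le_max_left _ _)
    have hmem := sub_sum_range_mem_closure hVm (tendsto_seriesMap hVm hν hx) (N := N)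
      fun i hi => (hb i).trans (by gcongr)
    rw [h0, zero_sub] at hmem
    exact (hVm N).neg_sum_notMem x (fun i _ => hb i) ⟨j, by omega, hj⟩ hmem
  · intro hxI
    refine tendsto_nhds_unique (tendsto_seriesMap hVm hν hx) ?_
    simp only [mem_annihilatedBy.mp (hVm _).mem_annihilatedBy _ (hxI _), sum_const_zero,
      tendsto_const_nhds]

theorem exists_forall_l1Norm_lt_seriesMap_mem [IsTopologicalAddGroup M] {c : ℝ} (hc0 : 0 < c)
    (hc : ∀ r, ν r < c → r = 0) {W : Set M} (hW : W ∈ 𝓝 0) :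
    ∃ δ > 0, ∀ z, MemL1 ν z → l1Norm ν z < δ → seriesMap m z ∈ W := by
  obtain ⟨ε, hε, hεW⟩ := Metric.mem_nhds_iff.mp hW
  obtain ⟨K, hK⟩ := exists_pow_lt_of_lt_one hε (by norm_num : (1 / 2 : ℝ) < 1)
  refine ⟨min 1 (c / (K + 1)!), by positivity, fun z hz hzδ => hεW ?_⟩
  have hzle := hz.le_l1Norm_mul_factorial hν
  have hhead : ∀ i < K + 1, z i = 0 := fun i hi => hc _ <|
    calc ν (z i) ≤ l1Norm ν z * i ! := hzle i
      _ < c / (K + 1)! * i ! := by gcongr; exact hzδ.trans_le (min_le_right _ _)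
      _ ≤ c / (K + 1)! * (K + 1)! := by gcongr
      _ = c := div_mul_cancel₀ c (by positivity)
  have htail : ∀ i ≥ K + 1, ν (z i) ≤ i * i ! := fun i hi =>
    calc ν (z i) ≤ 1 * i ! := (hzle i).trans (by gcongr; exact hzδ.le.trans (min_le_left _ _))
      _ ≤ i * i ! := by gcongr; exact_mod_cast (by omega : 1 ≤ i)
  have hmem := sub_sum_range_mem_closure hVm (tendsto_seriesMap hVm hν hz) htail
  rw [sum_eq_zero fun i hi => by rw [hhead i (mem_range.mp hi), zero_smul], sub_zero] at hmem
  refine Metric.ball_subset_ball ?_ ((hVm (K + 1)).closure_add_subset hmem)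
  exact (pow_le_pow_of_le_one (by norm_num) (by norm_num) K.le_succ).trans hK.le

theorem exists_forall_l1Norm_sub_lt_seriesMap_mem [IsTopologicalAddGroup M]
    (hneg : ∀ a, ν (-a) = ν a) (hadd : ∀ a b, ν (a + b) ≤ ν a + ν b) {c : ℝ} (hc0 : 0 < c)
    (hc : ∀ r, ν r < c → r = 0) {x : ℕ → R} (hx : MemL1 ν x) {U : Set M}
    (hU : U ∈ 𝓝 (seriesMap m x)) :
    ∃ δ > 0, ∀ y, MemL1 ν y → l1Norm ν (y - x) < δ → seriesMap m y ∈ U := by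
  obtain ⟨δ, hδ, hδW⟩ := exists_forall_l1Norm_lt_seriesMap_mem hVm hν hc0 hc
    (W := (seriesMap m x + ·) ⁻¹' U)
    ((continuous_const_add _).continuousAt.preimage_mem_nhds (by rwa [add_zero]))
  refine ⟨δ, hδ, fun y hy hyx => ?_⟩
  have hyx' := hy.sub_s16 hν hneg hadd hx
  have := hδW _ hyx' hyx
  rwa [Set.mem_preimage, ← seriesMap_add hVm hν hx hyx' (by rwa [add_sub_cancel]),
    add_sub_cancel] at this

end SeriesMap

theorem stmt_16_general (R : Type*) [Ring R] [Countable R] [IsNoetherianRing R]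
    (ν : R → ℝ)
    -- ν is a proper norm on the countable discrete ring R (finite closed balls):
    (hnonneg : ∀ a, 0 ≤ ν a)
    (hzero : ∀ a, ν a = 0 ↔ a = 0)
    (hneg : ∀ a, ν (-a) = ν a)
    (hadd : ∀ a b, ν (a + b) ≤ ν a + ν b)
    (hproper : ∀ (a : R) (ε : ℝ), {b : R | ν (b - a) ≤ ε}.Finite)
    -- M is a Polish topological R-module (R discrete):
    (M : Type*) [AddCommGroup M] [Module R M] [TopologicalSpace M]
    [IsTopologicalAddGroup M] [ContinuousConstSMul R M] [PolishSpace M]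
    -- which is uncountable:
    (huncount : ¬ Countable M) :
    -- then there is a proper two-sided ideal I and a continuous R-linear map
    -- ℓ¹(R) → M with kernel exactly ℓ¹(I):
    ∃ I : Ideal R, I ≠ ⊤ ∧ (∀ a ∈ I, ∀ r : R, a * r ∈ I) ∧
      ∃ f : {x : ℕ → R // MemL1 ν x} → M,
        (∀ (x y : {x : ℕ → R // MemL1 ν x}) (h : MemL1 ν (x.1 + y.1)),
          f ⟨x.1 + y.1, h⟩ = f x + f y) ∧
        (∀ (r : R) (x : {x : ℕ → R // MemL1 ν x}) (h : MemL1 ν (r • x.1)),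
          f ⟨r • x.1, h⟩ = r • f x) ∧
        (∀ x : {x : ℕ → R // MemL1 ν x}, ∀ U ∈ nhds (f x),
          ∃ δ > 0, ∀ y : {x : ℕ → R // MemL1 ν x},
            l1Norm ν (y.1 - x.1) < δ → f y ∈ U) ∧
        (∀ x : {x : ℕ → R // MemL1 ν x}, f x = 0 ↔ ∀ k, x.1 k ∈ I) := by
  obtain ⟨I, hI, hI2, hdense⟩ := exists_isTwoSided_forall_dense_smul_ne (R := R) huncount
  let := upgradeIsCompletelyMetrizable M
  have hfin (b : ℝ) : {r : R | ν r ≤ b}.Finite := by simpa using hproper 0 b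
  obtain ⟨c, hc0, hc⟩ := exists_pos_forall_lt_imp_eq_zero hnonneg hzero hfin
  obtain ⟨V, m, hVm⟩ := exists_forall_isGoodStage hfin hdense
  refine ⟨I, hI, fun a ha r => hI2.mul_mem_of_left r ha, fun x => seriesMap m x.1,
    fun x y h => seriesMap_add hVm hnonneg x.2 y.2 h,
    fun r x h => seriesMap_smul hVm hnonneg r x.2 h, fun x U hU => ?_,
    fun x => seriesMap_eq_zero_iff hVm hnonneg x.2⟩
  obtain ⟨δ, hδ, hδU⟩ :=
    exists_forall_l1Norm_sub_lt_seriesMap_mem hVm hnonneg hneg hadd hc0 hc x.2 hU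
  exact ⟨δ, hδ, fun y => hδU y.1 y.2⟩

theorem stmt_16 (R : Type*) [Ring R] [Countable R] [IsNoetherianRing R]
    (ν : R → ℝ)
    -- ν is a proper norm on the countable discrete ring R (finite closed balls):
    (hnonneg : ∀ a, 0 ≤ ν a)
    (hzero : ∀ a, ν a = 0 ↔ a = 0)
    (hneg : ∀ a, ν (-a) = ν a)
    (hadd : ∀ a b, ν (a + b) ≤ ν a + ν b)
    (hmul : ∀ a b, ν (a * b) ≤ ν a * ν b)
    (hproper : ∀ (a : R) (ε : ℝ), {b : R | ν (b - a) ≤ ε}.Finite)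
    -- M is a Polish topological R-module (R discrete):
    (M : Type*) [AddCommGroup M] [Module R M] [TopologicalSpace M]
    [IsTopologicalAddGroup M] [ContinuousConstSMul R M] [PolishSpace M]
    -- which is uncountable:
    (huncount : ¬ Countable M) :
    -- then there is a proper two-sided ideal I and a continuous R-linear map
    -- ℓ¹(R) → M with kernel exactly ℓ¹(I):
    ∃ I : Ideal R, I ≠ ⊤ ∧ (∀ a ∈ I, ∀ r : R, a * r ∈ I) ∧
      ∃ f : {x : ℕ → R // MemL1 ν x} → M,
        (∀ (x y : {x : ℕ → R // MemL1 ν x}) (h : MemL1 ν (x.1 + y.1)),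
          f ⟨x.1 + y.1, h⟩ = f x + f y) ∧
        (∀ (r : R) (x : {x : ℕ → R // MemL1 ν x}) (h : MemL1 ν (r • x.1)),
          f ⟨r • x.1, h⟩ = r • f x) ∧
        (∀ x : {x : ℕ → R // MemL1 ν x}, ∀ U ∈ nhds (f x),
          ∃ δ > 0, ∀ y : {x : ℕ → R // MemL1 ν x},
            l1Norm ν (y.1 - x.1) < δ → f y ∈ U) ∧
        (∀ x : {x : ℕ → R // MemL1 ν x}, f x = 0 ↔ ∀ k, x.1 k ∈ I) :=
  stmt_16_general R ν hnonneg hzero hneg hadd hproper M huncount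
end
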